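/- arXiv:1806.01021 — 6 statements merged into one kernel-verified Lean document; each statement's English description precedes it below -/
import Mathlib

section
/- Let R be a complete discrete valuation domain with field of fractions Q, and let Λ be an R-order in a finite-dimensional Q-algebra A. Then every Λ-lattice is pure injective (algebraically compact) as a Λ-module. -/
open scoped TensorProduct

universe u v w

/-- A module `M` over `Λ` is pure injective (equivalently, algebraically compact) if every
system of linear equations with coefficients in `Λ` (almost all zero in each equation) and
parameters in `M`, each of whose finite subsystems has a solution in `M`, has a solution
in `M`. -/
def PureInjective (Λ : Type u) [Ring Λ] (M : Type v) [AddCommGroup M] [Module Λ M] : Prop :=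
  ∀ (ι κ : Type w) (a : ι → κ →₀ Λ) (b : ι → M),
    (∀ s : Finset ι, ∃ x : κ → M, ∀ i ∈ s, ((a i).sum fun j c => c • x j) = b i) →
    ∃ x : κ → M, ∀ i, ((a i).sum fun j c => c • x j) = b i

/-- A module is indecomposable if it is nonzero and is not the internal direct sum of two
nonzero submodules. -/
def IsIndecomposable (Λ : Type u) [Ring Λ] (M : Type v) [AddCommGroup M] [Module Λ M] : Prop :=
  (∃ m : M, m ≠ 0) ∧ ¬∃ U W : Submodule Λ M, U ≠ ⊥ ∧ W ≠ ⊥ ∧ IsCompl U W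

/-- A module `M` over an `R`-algebra `Λ` is `R`-torsionfree if nonzero elements of `R` act on
nonzero elements of `M` without producing `0`. -/
def RTorsionFree (R : Type w) [CommRing R] (Λ : Type u) [Ring Λ] [Algebra R Λ]
    (M : Type v) [AddCommGroup M] [Module Λ M] : Prop :=
  ∀ (m : M) (r : R), m ≠ 0 → r ≠ 0 → algebraMap R Λ r • m ≠ 0

/-- The submodule `M·r` of all multiples of a central scalar `r : R` in `M`. -/
def smulRange (R : Type w) [CommRing R] (Λ : Type u) [Ring Λ] [Algebra R Λ]
    (M : Type v) [AddCommGroup M] [Module Λ M] (r : R) : Submodule Λ M where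
  carrier := Set.range fun m : M => algebraMap R Λ r • m
  add_mem' := by
    rintro _ _ ⟨a, rfl⟩ ⟨b, rfl⟩
    exact ⟨a + b, by dsimp only; rw [smul_add]⟩
  zero_mem' := ⟨0, by dsimp only; rw [smul_zero]⟩
  smul_mem' := by
    rintro c _ ⟨a, rfl⟩
    exact ⟨c • a, by dsimp only; rw [smul_smul, smul_smul, Algebra.commutes]⟩

/-- The additive subgroup `M·I` of finite sums of elements `ρ s • m` with `s ∈ I`, `m ∈ M`. -/
def idealSmul {R : Type w} [CommRing R] {Λ : Type u} [Ring Λ] (ρ : R →+* Λ) (I : Ideal R)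
    (M : Type v) [AddCommGroup M] [Module Λ M] : AddSubgroup M :=
  AddSubgroup.closure {x | ∃ s ∈ I, ∃ m : M, x = ρ s • m}

/-- `Λ` is an `R`-order in the finite-dimensional `Q`-algebra `A`, realized via the embedding
`i : Λ →ₐ[R] A`: this says that `Λ` is (isomorphic to) a subring of `A` whose centre contains
`R` (the `R`-algebra structure), which is finitely generated as an `R`-module, and such that
`Q·Λ = A`. -/
structure IsOrderIn (R : Type*) [CommRing R] (Q : Type*) [Field Q] [Algebra R Q]
    (A : Type*) [Ring A] [Algebra Q A] [Algebra R A] [IsScalarTower R Q A]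
    (Λ : Type*) [Ring Λ] [Algebra R Λ] (i : Λ →ₐ[R] A) : Prop where
  fin : Module.Finite R Λ
  inj : Function.Injective i
  span : Submodule.span Q (Set.range i) = ⊤

/-- A `Λ`-lattice: a finitely generated `R`-torsionfree `Λ`-module. -/
def IsLatticeModule (R : Type w) [CommRing R] (Λ : Type u) [Ring Λ] [Algebra R Λ]
    (M : Type v) [AddCommGroup M] [Module Λ M] : Prop :=
  Module.Finite Λ M ∧ RTorsionFree R Λ M

/-- The solution set in the (right) module `M` of the system of linear equations (pp-formula in
one free variable) determined by the `(1+l) × n` matrix `T`: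
`sol_T(M) = {m | ∃ y, (m,y)·T = 0}`. -/
def solSet {Λ : Type u} [Ring Λ] {l n : ℕ} (T : Matrix (Fin (l + 1)) (Fin n) Λ)
    (M : Type v) [AddCommGroup M] [Module Λ M] : Set M :=
  {m | ∃ y : Fin l → M, ∀ j : Fin n, T 0 j • m + ∑ k : Fin l, T k.succ j • y k = 0}

/-- `T ≤ T'` : the solution set of `T` is contained in that of `T'` in every `R`-torsionfree
`Λ`-module. -/
def MatLE (R : Type*) [CommRing R] (Λ : Type u) [Ring Λ] [Algebra R Λ]
    {l n l' n' : ℕ} (T : Matrix (Fin (l + 1)) (Fin n) Λ)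
    (T' : Matrix (Fin (l' + 1)) (Fin n') Λ) : Prop :=
  ∀ (M : Type v) [AddCommGroup M] [Module Λ M], RTorsionFree R Λ M → solSet T M ⊆ solSet T' M

/-- `T ∈ D` : in every `R`-torsionfree `Λ`-module `M`, the solution set of `T` contains `M·p`. -/
def MatD (R : Type*) [CommRing R] (Λ : Type u) [Ring Λ] [Algebra R Λ] (p : R)
    {l n : ℕ} (T : Matrix (Fin (l + 1)) (Fin n) Λ) : Prop :=
  ∀ (M : Type v) [AddCommGroup M] [Module Λ M], RTorsionFree R Λ M →
    ∀ m : M, algebraMap R Λ p • m ∈ solSet T M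

/-- `sol*_T(N)` relative to `r` : those `m ∈ N` for which there is `y` with all the entries of
the row vector `(m,y)·T` lying in `N·r`. -/
def solModSet {R : Type*} [CommRing R] {Λ : Type u} [Ring Λ] [Algebra R Λ]
    {l n : ℕ} (T : Matrix (Fin (l + 1)) (Fin n) Λ)
    (N : Type v) [AddCommGroup N] [Module Λ N] (r : R) : Set N :=
  {m | ∃ y : Fin l → N, ∀ j : Fin n, ∃ x : N,
    T 0 j • m + ∑ k : Fin l, T k.succ j • y k = algebraMap R Λ r • x}

/-- `R'` is (up to isomorphism) the `π`-adic completion of `R`: it is `π`-adically separated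
and complete, `R` is dense in it, and `R → R'` induces isomorphisms `R/π^k ≅ R'/π^k R'`. -/
structure IsPiAdicCompletion (R : Type*) [CommRing R] (π : R)
    (R' : Type*) [CommRing R'] [Algebra R R'] : Prop where
  haus : ∀ x : R', (∀ k : ℕ, ∃ y : R', x = algebraMap R R' (π ^ k) * y) → x = 0
  complete : ∀ f : ℕ → R',
    (∀ m k : ℕ, m ≤ k → ∃ y : R', f k - f m = algebraMap R R' (π ^ m) * y) →
    ∃ x : R', ∀ k : ℕ, ∃ y : R', x - f k = algebraMap R R' (π ^ k) * y
  dense : ∀ (x : R') (k : ℕ), ∃ (r : R) (y : R'),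
    x - algebraMap R R' r = algebraMap R R' (π ^ k) * y
  inj : ∀ (r : R) (k : ℕ),
    (∃ y : R', algebraMap R R' r = algebraMap R R' (π ^ k) * y) → ∃ c : R, r = π ^ k * c

section CompleteDVRHelpers
open Ideal

def affIdeal {R : Type u} [CommRing R] (C : Set R) (c₀ : R) (h0 : c₀ ∈ C)
    (haff : ∀ x ∈ C, ∀ y ∈ C, ∀ z ∈ C, x - y + z ∈ C)
    (hsmul : ∀ x ∈ C, ∀ y ∈ C, ∀ r : R, y + r * (x - y) ∈ C) : Ideal R where
  carrier := {d | c₀ + d ∈ C}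
  zero_mem' := by simpa using h0
  add_mem' := by
    intro d e hd he
    have := haff _ hd c₀ h0 _ he
    have h2 : c₀ + d - c₀ + (c₀ + e) = c₀ + (d + e) := by ring
    rw [h2] at this
    exact this
  smul_mem' := by
    intro r d hd
    have := hsmul _ hd c₀ h0 r
    have h2 : c₀ + r * (c₀ + d - c₀) = c₀ + r * d := by ring
    rw [h2] at this
    simpa using this

theorem coset_lemma (R : Type u) [CommRing R] [IsDomain R] [IsDiscreteValuationRing R]
    [IsAdicComplete (IsLocalRing.maximalIdeal R) R]
    {α : Type v} (C : α → Set R) (F₀ : α)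
    (hne : ∀ F, (C F).Nonempty)
    (haff : ∀ F, ∀ x ∈ C F, ∀ y ∈ C F, ∀ z ∈ C F, x - y + z ∈ C F)
    (hsmul : ∀ F, ∀ x ∈ C F, ∀ y ∈ C F, ∀ r : R, y + r * (x - y) ∈ C F)
    (hdir : ∀ F G : α, ∃ H, C H ⊆ C F ∧ C H ⊆ C G) :
    ∃ c, ∀ F, c ∈ C F := by
  classical
  obtain ⟨π, hπ⟩ := IsDiscreteValuationRing.exists_irreducible R
  have hmax : IsLocalRing.maximalIdeal R = Ideal.span {π} :=
    (IsDiscreteValuationRing.irreducible_iff_uniformizer π).mp hπ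
  set I := IsLocalRing.maximalIdeal R with hI
  have hspan : ∀ k : ℕ, (I ^ k : Ideal R) = Ideal.span {π ^ k} := by
    intro k; rw [hmax, Ideal.span_singleton_pow]
  have hsmultop : ∀ k : ℕ, (I ^ k • ⊤ : Submodule R R) = (I ^ k : Ideal R) := by
    intro k; rw [smul_eq_mul, mul_top]
  choose c₀ hc₀ using hne
  set J : α → Ideal R := fun F => affIdeal (C F) (c₀ F) (hc₀ F) (haff F) (hsmul F) with hJ
  have hmemJ : ∀ F d, d ∈ J F ↔ c₀ F + d ∈ C F := fun F d => Iff.rfl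
  -- difference of two elements lies in J
  have hsub : ∀ F, ∀ x ∈ C F, ∀ y ∈ C F, x - y ∈ J F := by
    intro F x hx y hy
    rw [hmemJ]
    have := haff F x hx y hy (c₀ F) (hc₀ F)
    have h2 : x - y + c₀ F = c₀ F + (x - y) := by ring
    rwa [h2] at this
  have hadd : ∀ F, ∀ y ∈ C F, ∀ d ∈ J F, y + d ∈ C F := by
    intro F y hy d hd
    rw [hmemJ] at hd
    have := haff F y hy (c₀ F) (hc₀ F) _ hd
    have h2 : y - c₀ F + (c₀ F + d) = y + d := by ring
    rwa [h2] at this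
  have hmono : ∀ {F G : α}, C F ⊆ C G → J F ≤ J G := by
    intro F G h d hd
    rw [hmemJ] at hd
    have := hsub G _ (h hd) _ (h (hc₀ F))
    simpa using this
  have hcoseteq : ∀ {F G : α}, C F ⊆ C G → J G ≤ J F → C G ⊆ C F := by
    intro F G h hle x hx
    have h1 : x - c₀ F ∈ J G := hsub G x hx _ (h (hc₀ F))
    have := hadd F _ (hc₀ F) _ (hle h1)
    simpa using this
  by_cases hQ : ∀ k : ℕ, ∃ F, J F ≤ Ideal.span {π ^ k}
  · -- unbounded case: build a Cauchy sequence
    choose Fk hFk using hQ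
    let G : ℕ → α := fun k => Nat.rec (Fk 0) (fun k Gk => (hdir Gk (Fk (k + 1))).choose) k
    have hGsucc1 : ∀ k, C (G (k + 1)) ⊆ C (G k) := fun k =>
      (hdir (G k) (Fk (k + 1))).choose_spec.1
    have hGsucc2 : ∀ k, C (G (k + 1)) ⊆ C (Fk (k + 1)) := fun k =>
      (hdir (G k) (Fk (k + 1))).choose_spec.2
    have hGJ : ∀ k, J (G k) ≤ Ideal.span {π ^ k} := by
      intro k
      cases k with
      | zero => exact hFk 0
      | succ k => exact le_trans (hmono (hGsucc2 k)) (hFk (k + 1))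
    have hGmono : ∀ {m k : ℕ}, m ≤ k → C (G k) ⊆ C (G m) := by
      intro m k h
      induction h with
      | refl => exact subset_rfl
      | step h ih => exact fun x hx => ih (hGsucc1 _ hx)
    -- Cauchy sequence of chosen points
    have hcauchy : ∀ {m k : ℕ}, m ≤ k → c₀ (G m) - c₀ (G k) ∈ (I ^ m • ⊤ : Submodule R R) := by
      intro m k h
      rw [hsmultop, hspan]
      exact hGJ m (hsub (G m) _ (hc₀ (G m)) _ (hGmono h (hc₀ (G k))))
    obtain ⟨L, hL⟩ := IsPrecomplete.prec (inferInstance : IsPrecomplete I R)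
      (f := fun k => c₀ (G k)) (fun {m k} h => (SModEq.sub_mem).mpr (hcauchy h))
    have hLk : ∀ k, c₀ (G k) - L ∈ Ideal.span {π ^ k} := by
      intro k
      have := (SModEq.sub_mem).mp (hL k)
      rwa [hsmultop, hspan] at this
    refine ⟨L, fun F => ?_⟩
    by_cases hbot : J F = ⊥
    · -- C F is a singleton {c₀ F}
      have hsingle : ∀ x ∈ C F, x = c₀ F := by
        intro x hx
        have := hsub F x hx _ (hc₀ F)
        rw [hbot] at this
        exact sub_eq_zero.mp (Ideal.mem_bot.mp this)
      have : L - c₀ F = 0 := by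
        apply IsHausdorff.haus (inferInstance : IsHausdorff I R)
        intro k
        rw [SModEq.sub_mem, sub_zero, hsmultop, hspan]
        obtain ⟨H, h1, h2⟩ := hdir (G k) F
        have hz1 : c₀ H ∈ C (G k) := h1 (hc₀ H)
        have hz2 : c₀ H = c₀ F := hsingle _ (h2 (hc₀ H))
        have d1 : c₀ (G k) - L ∈ Ideal.span {π ^ k} := hLk k
        have d2 : c₀ H - c₀ (G k) ∈ Ideal.span {π ^ k} :=
          hGJ k (hsub (G k) _ hz1 _ (hc₀ (G k)))
        rw [hz2] at d2
        have heq : L - c₀ F = -(c₀ (G k) - L) + -(c₀ F - c₀ (G k)) := by ring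
        rw [heq]
        exact add_mem (neg_mem d1) (neg_mem d2)
      rw [sub_eq_zero] at this
      rw [this]; exact hc₀ F
    · obtain ⟨n, hn⟩ := IsDiscreteValuationRing.ideal_eq_span_pow_irreducible hbot hπ
      obtain ⟨H, h1, h2⟩ := hdir (G n) F
      have hz1 : c₀ H ∈ C (G n) := h1 (hc₀ H)
      have d1 : c₀ (G n) - L ∈ Ideal.span {π ^ n} := hLk n
      have d2 : c₀ H - c₀ (G n) ∈ Ideal.span {π ^ n} :=
        hGJ n (hsub (G n) _ hz1 _ (hc₀ (G n)))
      have hLz : L - c₀ H ∈ J F := by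
        rw [hn]
        have : L - c₀ H = -(c₀ (G n) - L) + -(c₀ H - c₀ (G n)) := by ring
        rw [this]
        exact add_mem (neg_mem d1) (neg_mem d2)
      have := hadd F _ (h2 (hc₀ H)) _ hLz
      simpa using this
  · push_neg at hQ
    obtain ⟨k₀, hk₀⟩ := hQ
    have hnb : ∀ F, J F ≠ ⊥ := by
      intro F h
      exact absurd (hk₀ F) (by rw [h]; exact not_lt.mpr bot_le)
    choose n hn using fun F => IsDiscreteValuationRing.ideal_eq_span_pow_irreducible (hnb F) hπ
    have hle : ∀ F, n F ≤ k₀ := by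
      intro F
      by_contra h
      push_neg at h
      exact absurd (hk₀ F) (not_lt.mpr (by
        rw [hn F]
        exact Ideal.span_singleton_le_span_singleton.mpr (pow_dvd_pow π h.le)))
    set K := Nat.findGreatest (fun k => ∃ F, n F = k) k₀ with hK
    obtain ⟨Fs, hFs⟩ : ∃ F, n F = K := Nat.findGreatest_spec (P := fun k => ∃ F, n F = k) (hle F₀) ⟨F₀, rfl⟩
    have hKmax : ∀ F, n F ≤ K := fun F => Nat.le_findGreatest (P := fun k => ∃ G, n G = k) (hle F) ⟨F, rfl⟩
    refine ⟨c₀ Fs, fun F => ?_⟩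
    obtain ⟨H, h1, h2⟩ := hdir Fs F
    have hJH : J H ≤ J Fs := hmono h1
    have hnH : n H = K := by
      have hd : π ^ K ∣ π ^ (n H) := by
        have : (π : R) ^ (n H) ∈ J Fs := hJH (by rw [hn H]; exact Ideal.subset_span rfl)
        rw [hn Fs, hFs] at this
        exact (Ideal.mem_span_singleton).mp this
      have := (pow_dvd_pow_iff hπ.ne_zero hπ.not_isUnit).mp hd
      exact le_antisymm (hKmax H) this
    have hJeq : J Fs ≤ J H := by rw [hn H, hnH, ← hFs, ← hn Fs]
    exact h2 (hcoseteq h1 hJeq (hc₀ Fs))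


theorem dvr_pure_injective (R : Type u) [CommRing R] [IsDomain R] [IsDiscreteValuationRing R]
    [IsAdicComplete (IsLocalRing.maximalIdeal R) R]
    (ι : Type v) (κ : Type w) (a : ι → κ →₀ R) (b : ι → R)
    (h : ∀ s : Finset ι, ∃ x : κ → R, ∀ i ∈ s, ((a i).sum fun j c => c • x j) = b i) :
    ∃ x : κ → R, ∀ i, ((a i).sum fun j c => c • x j) = b i := by
  classical
  -- linearity of the left-hand sides in the unknowns
  have Lsub : ∀ (f : κ →₀ R) (x y : κ → R),
      (f.sum fun j c => c • (x j - y j)) =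
        (f.sum fun j c => c • x j) - (f.sum fun j c => c • y j) := by
    intro f x y
    simp only [Finsupp.sum, smul_sub, Finset.sum_sub_distrib]
  have Ladd : ∀ (f : κ →₀ R) (x y : κ → R),
      (f.sum fun j c => c • (x j + y j)) =
        (f.sum fun j c => c • x j) + (f.sum fun j c => c • y j) := by
    intro f x y
    simp only [Finsupp.sum, smul_add, Finset.sum_add_distrib]
  have Lmul : ∀ (f : κ →₀ R) (r : R) (x : κ → R),
      (f.sum fun j c => c • (r * x j)) = r * (f.sum fun j c => c • x j) := by
    intro f r x
    simp only [Finsupp.sum, smul_eq_mul, Finset.mul_sum, mul_left_comm]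
  -- "good" partial assignments
  set Good : Set (κ × R) → Prop := fun S =>
    ∀ s : Finset ι, ∃ x : κ → R,
      (∀ i ∈ s, ((a i).sum fun j c => c • x j) = b i) ∧ ∀ p ∈ S, x p.1 = p.2 with hGood
  set Func : Set (κ × R) → Prop := fun S =>
    ∀ p ∈ S, ∀ q ∈ S, p.1 = q.1 → p.2 = q.2 with hFunc
  set 𝒮 : Set (Set (κ × R)) := {S | Func S ∧ Good S} with h𝒮
  have hempty : (∅ : Set (κ × R)) ∈ 𝒮 := by
    constructor
    · intro p hp; exact absurd hp (Set.notMem_empty p)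
    · intro s
      obtain ⟨x, hx⟩ := h s
      exact ⟨x, hx, fun p hp => absurd hp (Set.notMem_empty p)⟩
  -- chain condition for Zorn's lemma
  have hchain : ∀ c ⊆ 𝒮, IsChain (· ⊆ ·) c → c.Nonempty →
      ∃ ub ∈ 𝒮, ∀ s ∈ c, s ⊆ ub := by
    intro c hc hch hcne
    have hfuncU : Func (⋃₀ c) := by
      rintro p ⟨S1, hS1, hp⟩ q ⟨S2, hS2, hq⟩ hpq
      rcases hch.total hS1 hS2 with h12 | h21
      · exact (hc hS2).1 p (h12 hp) q hq hpq
      · exact (hc hS1).1 p hp q (h21 hq) hpq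
    refine ⟨⋃₀ c, ⟨hfuncU, ?_⟩, fun s hs => Set.subset_sUnion_of_mem hs⟩
    intro s
    set T : Finset κ := s.biUnion fun i => (a i).support with hT
    set V : Set (κ × R) := {p ∈ ⋃₀ c | p.1 ∈ T} with hV
    have hVfin : V.Finite := by
      apply Set.Finite.of_finite_image (f := Prod.fst)
      · apply Set.Finite.subset T.finite_toSet
        rintro _ ⟨p, hp, rfl⟩; exact hp.2
      · intro p hp q hq h1
        exact Prod.ext h1 (hfuncU p hp.1 q hq.1 h1)
    -- a finite subset of the union of a chain lies in one member
    have haux : ∀ (W : Set (κ × R)), W.Finite → W ⊆ ⋃₀ c → ∃ S ∈ c, W ⊆ S := by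
      intro W hW
      apply Set.Finite.induction_on
        (motive := fun W _ => W ⊆ ⋃₀ c → ∃ S ∈ c, W ⊆ S) W hW
      · intro _
        obtain ⟨S, hS⟩ := hcne
        exact ⟨S, hS, Set.empty_subset S⟩
      · intro p W hpW hWfin ih hsub
        obtain ⟨S1, hS1, hWS1⟩ := ih fun q hq => hsub (Set.mem_insert_of_mem p hq)
        obtain ⟨S2, hS2, hpS2⟩ := hsub (Set.mem_insert p W)
        rcases hch.total hS1 hS2 with h12 | h21
        · exact ⟨S2, hS2, Set.insert_subset hpS2 fun q hq => h12 (hWS1 hq)⟩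
        · exact ⟨S1, hS1, Set.insert_subset (h21 hpS2) hWS1⟩
    obtain ⟨S, hSc, hVS⟩ := haux V hVfin fun p hp => hp.1
    obtain ⟨x, hx, hmatch⟩ := (hc hSc).2 s
    set x' : κ → R := fun j => if hj : ∃ r, (j, r) ∈ ⋃₀ c then hj.choose else x j with hx'
    have hx'match : ∀ p ∈ ⋃₀ c, x' p.1 = p.2 := by
      rintro ⟨j, r⟩ hp
      have hj : ∃ r', (j, r') ∈ ⋃₀ c := ⟨r, hp⟩
      have : x' j = hj.choose := by rw [hx']; exact dif_pos hj
      rw [this]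
      exact hfuncU (j, hj.choose) hj.choose_spec (j, r) hp rfl
    refine ⟨x', fun i hi => ?_, hx'match⟩
    have hagree : ∀ j ∈ (a i).support, x' j = x j := by
      intro j hj
      by_cases hex : ∃ r, (j, r) ∈ ⋃₀ c
      · have h1 : x' j = hex.choose := by rw [hx']; exact dif_pos hex
        have h2 : (j, hex.choose) ∈ V :=
          ⟨hex.choose_spec, Finset.mem_biUnion.mpr ⟨i, hi, hj⟩⟩
        have h3 : x j = hex.choose := hmatch (j, hex.choose) (hVS h2)
        rw [h1, h3]
      · rw [hx']; exact dif_neg hex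
    calc ((a i).sum fun j c => c • x' j) = (a i).sum fun j c => c • x j :=
          Finsupp.sum_congr fun j hj => by rw [hagree j hj]
      _ = b i := hx i hi
  obtain ⟨S, -, hSmem, hSmax⟩ := zorn_subset_nonempty 𝒮 hchain ∅ hempty
  -- every variable gets a value in a maximal good assignment
  have htotal : ∀ j₀ : κ, ∃ r, (j₀, r) ∈ S := by
    intro j₀
    by_contra hj₀
    push_neg at hj₀
    set C : Finset ι → Set R := fun F =>
      {r | ∃ x : κ → R, (∀ i ∈ F, ((a i).sum fun j c => c • x j) = b i) ∧
        (∀ p ∈ S, x p.1 = p.2) ∧ x j₀ = r} with hC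
    have hr₀ : ∃ r₀, ∀ F, r₀ ∈ C F := by
      apply coset_lemma R C ∅
      · intro F
        obtain ⟨x, hx, hm⟩ := hSmem.2 F
        exact ⟨x j₀, x, hx, hm, rfl⟩
      · rintro F u ⟨x, hx, hxm, rfl⟩ v ⟨y, hy, hym, rfl⟩ w ⟨z, hz, hzm, rfl⟩
        refine ⟨fun j => x j - y j + z j, fun i hi => ?_, fun p hp => ?_, rfl⟩
        · rw [Ladd, Lsub, hx i hi, hy i hi, hz i hi]; ring
        · dsimp only; rw [hxm p hp, hym p hp, hzm p hp]; ring
      · rintro F u ⟨x, hx, hxm, rfl⟩ v ⟨y, hy, hym, rfl⟩ r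
        refine ⟨fun j => y j + r * (x j - y j), fun i hi => ?_, fun p hp => ?_, rfl⟩
        · rw [Ladd, Lmul, Lsub, hx i hi, hy i hi]; ring
        · dsimp only; rw [hxm p hp, hym p hp]; ring
      · intro F G
        refine ⟨F ∪ G, ?_, ?_⟩
        · rintro u ⟨x, hx, hxm, rfl⟩
          exact ⟨x, fun i hi => hx i (Finset.mem_union_left G hi), hxm, rfl⟩
        · rintro u ⟨x, hx, hxm, rfl⟩
          exact ⟨x, fun i hi => hx i (Finset.mem_union_right F hi), hxm, rfl⟩
    obtain ⟨r₀, hr₀⟩ := hr₀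
    have hS' : insert (j₀, r₀) S ∈ 𝒮 := by
      constructor
      · intro p hp q hq hpq
        rcases Set.mem_insert_iff.mp hp with rfl | hp
        · rcases Set.mem_insert_iff.mp hq with rfl | hq
          · rfl
          · have hq1 : j₀ = q.1 := hpq
            have hq' : (j₀, q.2) = q := Prod.ext hq1 rfl
            exact absurd (hq' ▸ hq) (hj₀ q.2)
        · rcases Set.mem_insert_iff.mp hq with rfl | hq
          · have hp1 : j₀ = p.1 := hpq.symm
            have hp' : (j₀, p.2) = p := Prod.ext hp1 rfl
            exact absurd (hp' ▸ hp) (hj₀ p.2)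
          · exact hSmem.1 p hp q hq hpq
      · intro s
        obtain ⟨x, hx, hxm, hxj⟩ := hr₀ s
        refine ⟨x, hx, ?_⟩
        intro p hp
        rcases Set.mem_insert_iff.mp hp with rfl | hp
        · exact hxj
        · exact hxm p hp
    have := hSmax hS' (Set.subset_insert _ S)
    exact hj₀ r₀ (this (Set.mem_insert _ S))
  choose xv hxv using htotal
  refine ⟨xv, fun i => ?_⟩
  obtain ⟨x, hx, hxm⟩ := hSmem.2 {i}
  calc ((a i).sum fun j c => c • xv j) = (a i).sum fun j c => c • x j :=
        Finsupp.sum_congr fun j _ => by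
          rw [show xv j = x j from (hxm (j, xv j) (hxv j)).symm]
    _ = b i := hx i (Finset.mem_singleton_self i)

end CompleteDVRHelpers

/-- over a complete discrete valuation domain, every lattice over an order is
pure injective. -/
theorem statement_4
    (R : Type u) [CommRing R] [IsDomain R] [IsDiscreteValuationRing R]
    [IsAdicComplete (IsLocalRing.maximalIdeal R) R]
    (Q : Type u) [Field Q] [Algebra R Q] [IsFractionRing R Q]
    (A : Type u) [Ring A] [Algebra Q A] [Algebra R A] [IsScalarTower R Q A]
    [FiniteDimensional Q A]
    (Λ : Type u) [Ring Λ] [Algebra R Λ] (i : Λ →ₐ[R] A) (hΛ : IsOrderIn R Q A Λ i)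
    (M : Type v) [AddCommGroup M] [Module Λ M] (hM : IsLatticeModule R Λ M) :
    PureInjective Λ M := by
  classical
  obtain ⟨hMfin, hMtf⟩ := hM
  letI instRM : Module R M := Module.compHom M (algebraMap R Λ)
  haveI : IsScalarTower R Λ M := ⟨fun r c m => by
    show (r • c) • m = (algebraMap R Λ r) • c • m
    rw [Algebra.smul_def, mul_smul]⟩
  haveI : SMulCommClass R Λ M := ⟨fun r c m => by
    show (algebraMap R Λ r) • c • m = c • (algebraMap R Λ r) • m
    rw [← mul_smul, ← mul_smul, Algebra.commutes]⟩
  haveI := hΛ.fin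
  haveI := hMfin
  haveI : Module.Finite R M := Module.Finite.trans Λ M
  haveI : NoZeroSMulDivisors R M := by
    constructor
    intro r m hrm
    by_contra hcon
    push_neg at hcon
    exact hMtf m r hcon.2 hcon.1 hrm
  haveI : Module.Free R M := Module.free_of_finite_type_torsion_free'
  set η := Module.Free.ChooseBasisIndex R M with hη
  set e : Module.Basis η R M := Module.Free.chooseBasis R M with he
  intro ι κ a b hfin
  -- the transported system of R-linear equations
  set a' : ι × η → (κ × η) →₀ R := fun it =>
    (a it.1).sum fun j c => ∑ s : η, Finsupp.single (j, s) (e.repr (c • e s) it.2) with ha'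
  set b' : ι × η → R := fun it => e.repr (b it.1) it.2 with hb'
  have hkey : ∀ (i : ι) (t : η) (x : κ → M),
      ((a' (i, t)).sum fun j' c => c • e.repr (x j'.1) j'.2) =
        e.repr ((a i).sum fun j c => c • x j) t := by
    intro i t x
    have h1 : ((a' (i, t)).sum fun j' c => c • e.repr (x j'.1) j'.2) =
        Finsupp.linearCombination R (fun j' : κ × η => e.repr (x j'.1) j'.2) (a' (i, t)) :=
      (Finsupp.linearCombination_apply _ _).symm
    rw [h1, ha']
    rw [map_finsuppSum]
    -- right-hand side
    have h2 : e.repr ((a i).sum fun j c => c • x j) t =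
        (a i).sum fun j c => e.repr (c • x j) t := by
      rw [Finsupp.sum, Finsupp.sum, map_sum]
      rw [Finset.sum_apply']
    rw [h2]
    apply Finsupp.sum_congr
    intro j hj
    rw [map_sum]
    -- pointwise identity
    have h3 : ∀ (c : Λ), e.repr (c • x j) t = ∑ s, e.repr (x j) s * e.repr (c • e s) t := by
      intro c
      conv_lhs => rw [← e.sum_repr (x j)]
      rw [Finset.smul_sum]
      have h4 : ∀ s : η, c • (e.repr (x j) s • e s) = e.repr (x j) s • (c • e s) :=
        fun s => (smul_comm _ _ _).symm
      simp_rw [h4]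
      rw [map_sum, Finset.sum_apply']
      apply Finset.sum_congr rfl
      intro s _
      rw [map_smul, Finsupp.smul_apply, smul_eq_mul]
    rw [h3]
    apply Finset.sum_congr rfl
    intro s _
    rw [Finsupp.linearCombination_single, smul_eq_mul, mul_comm]
  have hfin' : ∀ s' : Finset (ι × η), ∃ X : κ × η → R,
      ∀ p ∈ s', ((a' p).sum fun j' c => c • X j') = b' p := by
    intro s'
    obtain ⟨x, hx⟩ := hfin (s'.image Prod.fst)
    refine ⟨fun j' => e.repr (x j'.1) j'.2, ?_⟩
    rintro ⟨i, t⟩ hp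
    rw [hkey i t x, hx i (Finset.mem_image_of_mem Prod.fst hp)]
  obtain ⟨X, hX⟩ := dvr_pure_injective R (ι × η) (κ × η) a' b' hfin'
  refine ⟨fun j => ∑ s, X (j, s) • e s, fun i => ?_⟩
  apply e.repr.injective
  ext t
  have h5 := hkey i t (fun j => ∑ s, X (j, s) • e s)
  have h6 : (fun j' : κ × η => e.repr ((fun j => ∑ s, X (j, s) • e s) j'.1) j'.2) = X := by
    funext p
    have := e.repr_sum_self (fun s => X (p.1, s))
    calc e.repr (∑ s, X (p.1, s) • e s) p.2 = X (p.1, p.2) := by rw [this]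
      _ = X p := rfl
  rw [← h5]
  have h7 : ((a' (i, t)).sum fun j' c =>
      c • e.repr ((fun j => ∑ s, X (j, s) • e s) j'.1) j'.2) =
      (a' (i, t)).sum fun j' c => c • X j' := by
    apply Finsupp.sum_congr
    intro j' _
    rw [show e.repr (∑ s, X (j'.1, s) • e s) j'.2 = X j' from congrFun h6 j']
  rw [h7, hX (i, t)]
end

section
/- Let R be a discrete valuation domain with field of fractions Q, let A be a finite-dimensional semisimple Q-algebra and let Λ be an R-order in A. Then every Λ-module M that is R-torsionfree and R-divisible (i.e. M·r = M for every nonzero r ∈ R) is injective as a Λ-module. -/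
open scoped TensorProduct

universe u v w

section AuxHelpers

variable (R : Type u) [CommRing R] (Λ : Type u) [Ring Λ] [Algebra R Λ]
variable (M : Type v) [AddCommGroup M] [Module Λ M]

/-- The action of `R` on `M` through central scalars of `Λ`, as a ring hom into the
`Λ`-linear endomorphisms of `M`. -/
def auxMulEnd : R →+* Module.End Λ M where
  toFun r :=
    { toFun := fun m => algebraMap R Λ r • m
      map_add' := fun m n => smul_add _ m n
      map_smul' := fun c m => by
        simp only [RingHom.id_apply, smul_smul, Algebra.commutes] }
  map_one' := by ext m; simp
  map_mul' r s := by
    ext m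
    show algebraMap R Λ (r * s) • m = algebraMap R Λ r • algebraMap R Λ s • m
    rw [smul_smul, ← map_mul]
  map_zero' := by ext m; simp
  map_add' r s := by ext m; simp [add_smul]

@[simp] lemma auxMulEnd_apply (r : R) (m : M) :
    auxMulEnd R Λ M r m = algebraMap R Λ r • m := rfl

lemma auxMulEnd_mem_center (r : R) :
    auxMulEnd R Λ M r ∈ Subring.center (Module.End Λ M) :=
  Subring.mem_center_iff.mpr fun f => LinearMap.ext fun m => (f.map_smul (algebraMap R Λ r) m)

/-- A central element which is a unit is a unit of the center. -/
lemma auxIsUnit_center {S : Type*} [Ring S] (x : Subring.center S) (h : IsUnit (x : S)) :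
    IsUnit x := by
  obtain ⟨u, hu⟩ := h
  have hx : ∀ g : S, g * (u : S) = (u : S) * g := by
    intro g; rw [hu]; exact Subring.mem_center_iff.mp x.2 g
  have hcen : (↑u⁻¹ : S) ∈ Subring.center S := by
    rw [Subring.mem_center_iff]
    intro g
    have hc : Commute g (↑u : S) := hx g
    exact hc.units_inv_right
  refine ⟨⟨x, ⟨(↑u⁻¹ : S), hcen⟩, ?_, ?_⟩, rfl⟩
  · exact Subtype.ext (by simp only [Subring.coe_mul]; rw [← hu, Units.mul_inv]; rfl)
  · exact Subtype.ext (by simp only [Subring.coe_mul]; rw [← hu, Units.inv_mul]; rfl)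

/-- Common denominator lemma. -/
lemma aux_exists_denom {R : Type u} [CommRing R] [IsDomain R] (Q : Type u) [Field Q] [Algebra R Q]
    [IsFractionRing R Q] {N : Type w} [AddCommGroup N] [Module R N] (z : Q ⊗[R] N) :
    ∃ s : R, s ≠ 0 ∧ ∃ n : N, algebraMap R Q s • z = (1 : Q) ⊗ₜ[R] n := by
  have key : ∀ (t : R) (n : N), algebraMap R Q t • ((1 : Q) ⊗ₜ[R] n) = (1 : Q) ⊗ₜ[R] (t • n) := by
    intro t n
    rw [TensorProduct.smul_tmul', smul_eq_mul, mul_one, Algebra.algebraMap_eq_smul_one,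
      TensorProduct.smul_tmul]
  induction z using TensorProduct.induction_on with
  | zero => exact ⟨1, one_ne_zero, 0, by simp⟩
  | tmul q n =>
      obtain ⟨⟨r, s⟩, hq⟩ := IsLocalization.surj (nonZeroDivisors R) q
      refine ⟨(s : R), nonZeroDivisors.ne_zero s.2, r • n, ?_⟩
      rw [TensorProduct.smul_tmul', smul_eq_mul, mul_comm, hq,
        Algebra.algebraMap_eq_smul_one, TensorProduct.smul_tmul]
  | add x y hx hy =>
      obtain ⟨s, hs, nx, hnx⟩ := hx
      obtain ⟨t, ht, ny, hny⟩ := hy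
      refine ⟨s * t, mul_ne_zero hs ht, t • nx + s • ny, ?_⟩
      have e1 : algebraMap R Q (s * t) • x = (1 : Q) ⊗ₜ[R] (t • nx) := by
        rw [mul_comm s t, map_mul, mul_smul, hnx, key]
      have e2 : algebraMap R Q (s * t) • y = (1 : Q) ⊗ₜ[R] (s • ny) := by
        rw [map_mul, mul_smul, hny, key]
      rw [smul_add, e1, e2, ← TensorProduct.tmul_add]

end AuxHelpers

set_option maxHeartbeats 1600000 in
set_option synthInstance.maxHeartbeats 400000 in
/-- over an order in a finite-dimensional semisimple algebra over the fraction
field of a discrete valuation domain `R`, every `R`-torsionfree `R`-divisible module is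
injective. -/
theorem statement_6
    (R : Type u) [CommRing R] [IsDomain R] [IsDiscreteValuationRing R]
    (Q : Type u) [Field Q] [Algebra R Q] [IsFractionRing R Q]
    (A : Type u) [Ring A] [Algebra Q A] [Algebra R A] [IsScalarTower R Q A]
    [FiniteDimensional Q A] [IsSemisimpleRing A]
    (Λ : Type u) [Ring Λ] [Algebra R Λ] (i : Λ →ₐ[R] A) (hΛ : IsOrderIn R Q A Λ i)
    (M : Type v) [AddCommGroup M] [Module Λ M]
    (htf : RTorsionFree R Λ M)
    (hdiv : ∀ r : R, r ≠ 0 → smulRange R Λ M r = ⊤) :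
    Module.Injective Λ M := by
  classical
  obtain ⟨fin, inj, hspan⟩ := hΛ
  -- `R`-module structure on `M` through `Λ`
  letI instRM : Module R M := Module.compHom M (algebraMap R Λ)
  have hRsmul : ∀ (r : R) (m : M), r • m = algebraMap R Λ r • m := fun _ _ => rfl
  haveI instTowerRLM : IsScalarTower R Λ M := by
    refine ⟨fun r l m => ?_⟩
    rw [hRsmul, Algebra.smul_def, mul_smul]
  -- every nonzero `r : R` acts bijectively on `M`
  have hbij : ∀ r : R, r ≠ 0 → Function.Bijective (auxMulEnd R Λ M r) := by
    intro r hr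
    constructor
    · intro m n hmn
      have h0 : algebraMap R Λ r • (m - n) = 0 := by
        rw [smul_sub, show algebraMap R Λ r • m = algebraMap R Λ r • n from hmn, sub_self]
      by_contra hne
      exact htf (m - n) r (sub_ne_zero.mpr hne) hr h0
    · intro m
      have hm : m ∈ smulRange R Λ M r := (hdiv r hr).symm ▸ Submodule.mem_top
      obtain ⟨x, hx⟩ := hm
      exact ⟨x, hx⟩
  -- the `Q`-module structure on `M`
  let cchi : R →+* Subring.center (Module.End Λ M) :=
    (auxMulEnd R Λ M).codRestrict _ (fun r => auxMulEnd_mem_center R Λ M r)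
  have hunit : ∀ y : nonZeroDivisors R, IsUnit (cchi y) := fun y =>
    auxIsUnit_center _ ((Module.End.isUnit_iff _).mpr (hbij y (nonZeroDivisors.ne_zero y.2)))
  let Psi : Q →+* Module.End Λ M :=
    (Subring.center (Module.End Λ M)).subtype.comp (IsLocalization.lift (S := Q) hunit)
  have hPsiAlg : ∀ r : R, Psi (algebraMap R Q r) = auxMulEnd R Λ M r := by
    intro r
    show ((IsLocalization.lift hunit) (algebraMap R Q r) : Module.End Λ M) = _
    rw [IsLocalization.lift_eq]
    rfl
  letI instQM : Module Q M := Module.compHom M Psi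
  have hQsmul : ∀ (q : Q) (m : M), q • m = Psi q m := fun _ _ => rfl
  haveI instTowerRQM : IsScalarTower R Q M := by
    refine ⟨fun r q m => ?_⟩
    show Psi (r • q) m = r • (Psi q m)
    rw [Algebra.smul_def, map_mul, Module.End.mul_apply, hPsiAlg, hRsmul]
    rfl
  haveI instCommQL : SMulCommClass Q Λ M := ⟨fun q l m => (Psi q).map_smul l m⟩
  -- the algebra isomorphism `Q ⊗[R] Λ ≃ A`
  let φ : (Q ⊗[R] Λ) →ₐ[Q] A :=
    Algebra.TensorProduct.lift (Algebra.ofId Q A) i (fun q l => Algebra.commutes q (i l))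
  have hφ_tmul : ∀ (q : Q) (l : Λ), φ (q ⊗ₜ[R] l) = algebraMap Q A q * i l := fun q l => by
    exact Algebra.TensorProduct.lift_tmul _ _ _ q l
  have hφ_surj : Function.Surjective φ := by
    intro a
    have ha : a ∈ Submodule.span Q (Set.range ⇑i) := hspan ▸ Submodule.mem_top
    induction ha using Submodule.span_induction with
    | mem x hx =>
        obtain ⟨l, rfl⟩ := hx
        exact ⟨(1 : Q) ⊗ₜ[R] l, by rw [hφ_tmul, map_one, one_mul]⟩
    | zero => exact ⟨0, map_zero φ⟩
    | add x y _ _ ihx ihy =>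
        obtain ⟨z₁, hz₁⟩ := ihx
        obtain ⟨z₂, hz₂⟩ := ihy
        exact ⟨z₁ + z₂, by rw [map_add, hz₁, hz₂]⟩
    | smul q x _ ih =>
        obtain ⟨z, hz⟩ := ih
        exact ⟨q • z, by rw [map_smul, hz]⟩
  have hφ_inj : Function.Injective φ := by
    rw [injective_iff_map_eq_zero]
    intro z hz
    obtain ⟨s, hs, l0, hl0⟩ := aux_exists_denom Q (N := Λ) z
    have h1 : φ (algebraMap R Q s • z) = 0 := by rw [map_smul, hz, smul_zero]
    rw [hl0, hφ_tmul, map_one, one_mul] at h1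
    have h3 : l0 = 0 := inj (by rw [h1, map_zero])
    rw [h3, TensorProduct.tmul_zero] at hl0
    have hs0 : algebraMap R Q s ≠ 0 := fun h =>
      hs ((IsFractionRing.to_map_eq_zero_iff (K := Q)).mp h)
    have h4 := congrArg (fun w => (algebraMap R Q s)⁻¹ • w) hl0
    simp only [smul_zero] at h4
    rwa [smul_smul, inv_mul_cancel₀ hs0, one_smul] at h4
  let eA : (Q ⊗[R] Λ) ≃ₐ[Q] A := AlgEquiv.ofBijective φ ⟨hφ_inj, hφ_surj⟩
  -- the `A`-module structure on `M`
  letI instTensorM : Module (Q ⊗[R] Λ) M := TensorProduct.Algebra.module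
  letI instAM : Module A M := Module.compHom M (eA.symm.toAlgHom.toRingHom)
  have hAsmul : ∀ (a : A) (m : M), a • m = (eA.symm a) • m := fun _ _ => rfl
  have heA : ∀ z : Q ⊗[R] Λ, eA z = φ z := fun _ => rfl
  have hA1 : ∀ (l : Λ) (m : M), i l • m = l • m := by
    intro l m
    have h : eA.symm (i l) = (1 : Q) ⊗ₜ[R] l := by
      rw [AlgEquiv.symm_apply_eq, heA, hφ_tmul, map_one, one_mul]
    rw [hAsmul, h, TensorProduct.Algebra.smul_def, one_smul]
  have hA2 : ∀ (q : Q) (m : M), algebraMap Q A q • m = q • m := by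
    intro q m
    have h : eA.symm (algebraMap Q A q) = q ⊗ₜ[R] (1 : Λ) := by
      rw [AlgEquiv.symm_apply_eq, heA, hφ_tmul, map_one, mul_one]
    rw [hAsmul, h, TensorProduct.Algebra.smul_def, one_smul]
  haveI instTowerQAM : IsScalarTower Q A M := by
    refine ⟨fun q a m => ?_⟩
    rw [Algebra.smul_def, mul_smul, hA2]
  -- Baer's criterion
  apply Module.Baer.injective
  intro I g
  let fI : ↥I →ₗ[R] A := i.toLinearMap ∘ₗ ((I.subtype).restrictScalars R)
  let θ : Q ⊗[R] ↥I →ₗ[Q] A := fI.liftBaseChange Q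
  let ψ : Q ⊗[R] ↥I →ₗ[Q] M := (g.restrictScalars R).liftBaseChange Q
  have hθ_tmul : ∀ (q : Q) (a : ↥I), θ (q ⊗ₜ[R] a) = q • i ↑a := fun q a => by
    simp [θ, fI]
  have hψ_tmul : ∀ (q : Q) (a : ↥I), ψ (q ⊗ₜ[R] a) = q • g a := fun q a => by
    simp [ψ]
  have hθ_inj : Function.Injective θ := by
    rw [injective_iff_map_eq_zero]
    intro z hz
    obtain ⟨s, hs, a0, ha0⟩ := aux_exists_denom Q z
    have h1 : θ (algebraMap R Q s • z) = 0 := by rw [map_smul, hz, smul_zero]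
    rw [ha0, hθ_tmul, one_smul] at h1
    have h3 : a0 = 0 := Subtype.ext (inj (by rw [h1, ZeroMemClass.coe_zero, map_zero]))
    rw [h3, TensorProduct.tmul_zero] at ha0
    have hs0 : algebraMap R Q s ≠ 0 := fun h =>
      hs ((IsFractionRing.to_map_eq_zero_iff (K := Q)).mp h)
    have h4 := congrArg (fun w => (algebraMap R Q s)⁻¹ • w) ha0
    simp only [smul_zero] at h4
    rwa [smul_smul, inv_mul_cancel₀ hs0, one_smul] at h4
  -- multiplication by elements of `A` preserves the image of `θ`, compatibly with `ψ`
  have hmul : ∀ a : A, ∀ z : Q ⊗[R] ↥I, ∃ z', θ z' = a • θ z ∧ ψ z' = a • ψ z := by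
    intro a
    have ha : a ∈ Submodule.span Q (Set.range ⇑i) := hspan ▸ Submodule.mem_top
    induction ha using Submodule.span_induction with
    | mem x hx =>
        obtain ⟨l, rfl⟩ := hx
        intro z
        induction z using TensorProduct.induction_on with
        | zero => exact ⟨0, by simp only [map_zero, smul_zero], by simp only [map_zero, smul_zero]⟩
        | tmul q b =>
            refine ⟨q ⊗ₜ[R] ⟨l * ↑b, I.mul_mem_left l b.2⟩, ?_, ?_⟩
            · rw [hθ_tmul, hθ_tmul]
              show q • i (l * ↑b) = i l • (q • i ↑b)
              rw [map_mul, smul_eq_mul, mul_smul_comm]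
            · rw [hψ_tmul, hψ_tmul, hA1]
              have hb : (⟨l * ↑b, I.mul_mem_left l b.2⟩ : ↥I) = l • b := rfl
              rw [hb, g.map_smul]
              exact smul_comm q l (g b)
        | add z₁ z₂ h₁ h₂ =>
            obtain ⟨w₁, ht₁, hp₁⟩ := h₁
            obtain ⟨w₂, ht₂, hp₂⟩ := h₂
            exact ⟨w₁ + w₂, by rw [map_add, ht₁, ht₂, map_add, smul_add],
              by rw [map_add, hp₁, hp₂, map_add, smul_add]⟩
    | zero => exact fun z => ⟨0, by simp only [map_zero, zero_smul],
        by simp only [map_zero, zero_smul]⟩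
    | add x y _ _ ihx ihy =>
        intro z
        obtain ⟨w₁, ht₁, hp₁⟩ := ihx z
        obtain ⟨w₂, ht₂, hp₂⟩ := ihy z
        exact ⟨w₁ + w₂, by rw [map_add, ht₁, ht₂, add_smul],
          by rw [map_add, hp₁, hp₂, add_smul]⟩
    | smul q x _ ih =>
        intro z
        obtain ⟨w, ht, hp⟩ := ih z
        exact ⟨q • w, by rw [map_smul, ht, smul_assoc],
          by rw [map_smul, hp, smul_assoc]⟩
  -- the left ideal of `A` generated by the image of `I`
  set J : Submodule A A := Submodule.span A (⇑i '' (I : Set Λ)) with hJdef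
  have hJ : ∀ x : A, x ∈ J → ∃ z : Q ⊗[R] ↥I, θ z = x := by
    intro x hx
    induction hx using Submodule.span_induction with
    | mem y hy =>
        obtain ⟨a, ha, rfl⟩ := hy
        exact ⟨(1 : Q) ⊗ₜ[R] ⟨a, ha⟩, by rw [hθ_tmul, one_smul]⟩
    | zero => exact ⟨0, map_zero θ⟩
    | add y₁ y₂ _ _ ih₁ ih₂ =>
        obtain ⟨z₁, hz₁⟩ := ih₁
        obtain ⟨z₂, hz₂⟩ := ih₂
        exact ⟨z₁ + z₂, by rw [map_add, hz₁, hz₂]⟩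
    | smul a y _ ih =>
        obtain ⟨z, hz⟩ := ih
        obtain ⟨z', ht, _⟩ := hmul a z
        exact ⟨z', by rw [ht, hz]⟩
  choose pick hpick using hJ
  -- the `A`-linear extension on `J`
  let G' : ↥J →ₗ[A] M :=
    { toFun := fun x => ψ (pick ↑x x.2)
      map_add' := by
        intro x y
        have h : pick ↑(x + y) (x + y).2 = pick ↑x x.2 + pick ↑y y.2 :=
          hθ_inj (by rw [map_add, hpick, hpick, hpick, Submodule.coe_add])
        show ψ (pick ↑(x + y) (x + y).2) = ψ (pick ↑x x.2) + ψ (pick ↑y y.2)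
        rw [h, map_add]
      map_smul' := by
        intro a x
        obtain ⟨z', ht, hp⟩ := hmul a (pick ↑x x.2)
        have h : pick ↑(a • x) (a • x).2 = z' :=
          hθ_inj (by rw [hpick, ht, hpick, Submodule.coe_smul])
        show ψ (pick ↑(a • x) (a • x).2) = a • ψ (pick ↑x x.2)
        rw [h, hp] }
  obtain ⟨C, hC⟩ := exists_isCompl J
  let prj : A →ₗ[A] ↥J := Submodule.linearProjOfIsCompl J C hC
  refine ⟨{ toFun := fun l => G' (prj (i l))
            map_add' := fun x y => by
              show G' (prj (i (x + y))) = G' (prj (i x)) + G' (prj (i y))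
              rw [map_add, map_add, map_add]
            map_smul' := fun m l => ?_ }, ?_⟩
  · show G' (prj (i (m * l))) = m • G' (prj (i l))
    rw [← hA1, map_mul, ← smul_eq_mul, LinearMap.map_smul, LinearMap.map_smul]
  · intro x hx
    have hmem : i x ∈ J := Submodule.subset_span ⟨x, hx, rfl⟩
    show G' (prj (i x)) = g ⟨x, hx⟩
    have h1 : prj (i x) = ⟨i x, hmem⟩ :=
      Submodule.linearProjOfIsCompl_apply_left hC ⟨i x, hmem⟩
    rw [h1]
    show ψ (pick (i x) hmem) = g ⟨x, hx⟩
    have h2 : pick (i x) hmem = (1 : Q) ⊗ₜ[R] (⟨x, hx⟩ : ↥I) :=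
      hθ_inj (by rw [hpick, hθ_tmul, one_smul])
    rw [h2, hψ_tmul, one_smul]
end

section
/- Let R be a discrete valuation domain with maximal ideal generated by π and field of fractions Q, let A be a finite-dimensional semisimple Q-algebra and let Λ be an R-order in A. Then every R-torsionfree Λ-module N decomposes as a direct sum of Λ-submodules N = N' ⊕ N'', where N'' = ⋂_{n≥0} N·π^n is R-divisible (N''·r = N'' for every nonzero r ∈ R) and N' is R-reduced, i.e. ⋂_{n≥0} N'·π^n = 0. -/
open scoped TensorProduct

universe u v w

/-
The submodule `N'' = ⋂ₙ N·πⁿ` is `π`-divisible because `N` is torsionfree, hence divisible by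
every nonzero `r = u πⁿ`. As `Λ` is an order, `Q ⊗[R] Λ ≅ A` is semisimple, and `N` embeds
into the `Q ⊗[R] Λ`-module `Q ⊗[R] N`. Divisibility of `N''` makes its image `1 ⊗ N''` a
`Q ⊗[R] Λ`-submodule; the preimage in `N` of a complement of it is a complement `N'` of `N''`.
Finally `⋂ₙ N'·πⁿ ⊆ N' ∩ N'' = 0`.
-/

section Order

variable {R : Type*} [CommRing R] (Q : Type*) [Field Q] [Algebra R Q] [IsFractionRing R Q]
  {A : Type*} [Ring A] [Algebra Q A] [Algebra R A] [IsScalarTower R Q A]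
  {Λ : Type*} [Ring Λ] [Algebra R Λ] {i : Λ →ₐ[R] A}

theorem bijective_tensorProduct_lift (hinj : Function.Injective i)
    (hspan : Submodule.span Q (Set.range i) = ⊤) :
    Function.Bijective (Algebra.TensorProduct.lift (Algebra.ofId Q A) i
      fun q _ => Algebra.commute_algebraMap_left q _) := by
  set φ := Algebra.TensorProduct.lift (Algebra.ofId Q A) i
    fun q _ => Algebra.commute_algebraMap_left q _
  have hφ (b : Λ) : φ ((1 : Q) ⊗ₜ[R] b) = i b := by
    change Algebra.ofId Q A 1 * i b = i b
    rw [map_one, one_mul]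
  refine ⟨(injective_iff_map_eq_zero φ).mpr fun t ht => ?_,
    LinearMap.range_eq_top.mp (top_unique (hspan ▸ Submodule.span_le.mpr ?_))⟩
  · have := (isLocalizedModule_iff_isBaseChange (nonZeroDivisors R) Q _).mpr
      (TensorProduct.isBaseChange R Λ Q)
    -- clearing denominators: `s • t = 1 ⊗ b` for some nonzero `s : R`
    obtain ⟨⟨b, s⟩, hs⟩ :=
      IsLocalizedModule.surj (nonZeroDivisors R) (TensorProduct.mk R Q Λ 1) t
    dsimp only at hs
    have hb : b = 0 := hinj <| by
      rw [map_zero, ← hφ, ← TensorProduct.mk_apply, ← hs, Submonoid.smul_def,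
        AlgHom.map_smul_of_tower, ht, smul_zero]
    apply IsLocalizedModule.smul_injective (TensorProduct.mk R Q Λ 1) s
    change s • t = s • 0
    rw [hs, hb, map_zero, smul_zero]
  · rintro _ ⟨b, rfl⟩
    exact ⟨(1 : Q) ⊗ₜ[R] b, hφ b⟩

theorem isSemisimpleRing_tensorProduct [IsSemisimpleRing A] (hinj : Function.Injective i)
    (hspan : Submodule.span Q (Set.range i) = ⊤) : IsSemisimpleRing (Q ⊗[R] Λ) :=
  (AlgEquiv.ofBijective _ (bijective_tensorProduct_lift Q hinj hspan)).toRingEquiv.symm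
    |>.isSemisimpleRing

end Order

namespace TensorProduct

variable {R : Type*} [CommRing R] (Q : Type*) [Field Q] [Algebra R Q]
  {Λ : Type*} [Ring Λ] [Algebra R Λ]
  {N : Type*} [AddCommGroup N] [Module Λ N] [Module R N] [IsScalarTower R Λ N]

def baseChangeAction : Q ⊗[R] Λ →ₐ[Q] Module.End Q (Q ⊗[R] N) :=
  Algebra.TensorProduct.lift (Algebra.ofId Q _)
    ((Module.End.baseChangeHom R Q N).comp (Algebra.lsmul R R N : Λ →ₐ[R] Module.End R N))
    fun q _ => Algebra.commute_algebraMap_left q _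

theorem baseChangeAction_tmul (q q' : Q) (a : Λ) (n : N) :
    baseChangeAction Q (q ⊗ₜ[R] a) (q' ⊗ₜ[R] n) = (q * q') ⊗ₜ[R] (a • n) := by
  change q • ((Algebra.lsmul R R N a : Module.End R N).baseChange Q) (q' ⊗ₜ[R] n) = _
  rw [LinearMap.baseChange_tmul, Algebra.lsmul_apply, smul_tmul', smul_eq_mul]

/-- Not a global instance: for `N = Λ` it would not be defeq to the multiplication of
`Q ⊗[R] Λ`. -/
abbrev baseChangeModule : Module (Q ⊗[R] Λ) (Q ⊗[R] N) :=
  Module.compHom _ (baseChangeAction Q (N := N)).toRingHom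

attribute [local instance] baseChangeModule

theorem baseChangeModule_smul (c : Q ⊗[R] Λ) (x : Q ⊗[R] N) :
    c • x = baseChangeAction Q c x :=
  rfl

def comapOneTmul (W : Submodule (Q ⊗[R] Λ) (Q ⊗[R] N)) : Submodule Λ N where
  carrier := {n | (1 : Q) ⊗ₜ[R] n ∈ W}
  add_mem' {m n} hm hn := by
    change (1 : Q) ⊗ₜ[R] (m + n) ∈ W
    rw [tmul_add]
    exact W.add_mem hm hn
  zero_mem' := by
    change (1 : Q) ⊗ₜ[R] 0 ∈ W
    rw [tmul_zero]
    exact W.zero_mem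
  smul_mem' a n hn := by
    have h := W.smul_mem ((1 : Q) ⊗ₜ[R] a) hn
    rwa [baseChangeModule_smul, baseChangeAction_tmul, one_mul] at h

variable {Q} [IsDomain R] [IsFractionRing R Q]

theorem mk_one_injective [Module.IsTorsionFree R N] : Function.Injective (mk R Q N 1) := by
  have := (isLocalizedModule_iff_isBaseChange (nonZeroDivisors R) Q _).mpr (isBaseChange R N Q)
  exact (IsLocalizedModule.injective_iff_isRegular (nonZeroDivisors R) _).mpr fun c =>
    IsSMulRegular.of_ne_zero (nonZeroDivisors.coe_ne_zero c)

theorem exists_tmul_eq_one_tmul {D : Submodule R N}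
    (hD : ∀ r : R, r ≠ 0 → ∀ x ∈ D, ∃ z ∈ D, r • z = x) (q : Q) {x : N} (hx : x ∈ D) :
    ∃ d ∈ D, q ⊗ₜ[R] x = (1 : Q) ⊗ₜ[R] d := by
  obtain ⟨⟨r, s⟩, rfl⟩ := IsLocalization.mk'_surjective (nonZeroDivisors R) q
  obtain ⟨z, hz, rfl⟩ := hD s (nonZeroDivisors.coe_ne_zero s) x hx
  refine ⟨r • z, D.smul_mem r hz, ?_⟩
  rw [← smul_tmul, ← smul_tmul]
  congr 1
  rw [_root_.Algebra.smul_def, mul_comm, IsLocalization.mk'_spec, Algebra.algebraMap_eq_smul_one]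

variable (Q) in
def mapOneTmul (D : Submodule Λ N) (hD : ∀ r : R, r ≠ 0 → ∀ x ∈ D, ∃ z ∈ D, r • z = x) :
    Submodule (Q ⊗[R] Λ) (Q ⊗[R] N) where
  toAddSubmonoid := ((D.restrictScalars R).map (mk R Q N 1)).toAddSubmonoid
  smul_mem' c := by
    rintro _ ⟨x, hx, rfl⟩
    induction c using TensorProduct.induction_on with
    | zero => rw [zero_smul]; exact ⟨0, D.zero_mem, map_zero _⟩
    | tmul q a =>
      obtain ⟨d, hd, h⟩ :=
        exists_tmul_eq_one_tmul (D := D.restrictScalars R) hD q (D.smul_mem a hx)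
      refine ⟨d, hd, ?_⟩
      rw [mk_apply, mk_apply, baseChangeModule_smul, baseChangeAction_tmul, mul_one, h]
    | add c c' hc hc' => rw [add_smul]; exact AddSubmonoid.add_mem _ hc hc'

variable (Q) in
theorem exists_isCompl_of_divisible [IsSemisimpleRing (Q ⊗[R] Λ)] [Module.IsTorsionFree R N]
    (D : Submodule Λ N) (hD : ∀ r : R, r ≠ 0 → ∀ x ∈ D, ∃ z ∈ D, r • z = x) :
    ∃ N' : Submodule Λ N, IsCompl N' D := by
  obtain ⟨W', hW'⟩ := exists_isCompl (mapOneTmul Q D hD)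
  refine ⟨comapOneTmul Q W', Submodule.disjoint_def.mpr fun n hnW' hnD => ?_,
    codisjoint_iff.mpr (eq_top_iff.mpr fun n _ => ?_)⟩
  · have h0 := Submodule.disjoint_def.mp hW'.disjoint _ ⟨n, hnD, rfl⟩ hnW'
    exact mk_one_injective (by rwa [map_zero])
  · have hn : (1 : Q) ⊗ₜ[R] n ∈ mapOneTmul Q D hD ⊔ W' := hW'.sup_eq_top ▸ trivial
    obtain ⟨_, ⟨d, hd, rfl⟩, w', hw', hsum⟩ := Submodule.mem_sup.mp hn
    refine Submodule.mem_sup.mpr ⟨n - d, ?_, d, hd, sub_add_cancel n d⟩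
    change (1 : Q) ⊗ₜ[R] (n - d) ∈ W'
    rwa [tmul_sub, ← hsum, mk_apply, add_sub_cancel_left]

end TensorProduct

section SmulRange

variable {R : Type*} [CommRing R] {Λ : Type*} [Ring Λ] [Algebra R Λ]
  {N : Type*} [AddCommGroup N] [Module Λ N]

theorem mem_smulRange {r : R} {x : N} :
    x ∈ smulRange R Λ N r ↔ ∃ y : N, algebraMap R Λ r • y = x :=
  Iff.rfl

theorem smulRange_eq_top {D : Submodule Λ N} {r : R}
    (h : ∀ x ∈ D, ∃ z ∈ D, algebraMap R Λ r • z = x) : smulRange R Λ D r = ⊤ :=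
  eq_top_iff.mpr fun ⟨x, hx⟩ _ =>
    let ⟨z, hz, hzx⟩ := h x hx
    ⟨⟨z, hz⟩, Subtype.ext hzx⟩

theorem iInf_smulRange_pow_eq_bot {N' : Submodule Λ N} {π : R}
    (h : Disjoint N' (⨅ n : ℕ, smulRange R Λ N (π ^ n))) :
    ⨅ n : ℕ, smulRange R Λ N' (π ^ n) = ⊥ := by
  refine eq_bot_iff.mpr fun z hz => (Submodule.mem_bot _).mpr (Subtype.ext ?_)
  refine Submodule.disjoint_def.mp h z z.2 ((Submodule.mem_iInf _).mpr fun n => ?_)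
  obtain ⟨y, hy⟩ := mem_smulRange.mp ((Submodule.mem_iInf _).mp hz n)
  exact ⟨y, congrArg Subtype.val hy⟩

theorem RTorsionFree.smul_left_cancel (htf : RTorsionFree R Λ N) {r : R} (hr : r ≠ 0)
    {x y : N} (h : algebraMap R Λ r • x = algebraMap R Λ r • y) : x = y :=
  sub_eq_zero.mp <| by_contra fun hxy => htf _ r hxy hr (by rw [smul_sub, h, sub_self])

variable [IsDomain R]

theorem RTorsionFree.exists_pow_smul_eq (htf : RTorsionFree R Λ N) {π : R} (hπ : π ≠ 0)
    (k : ℕ) {x : N} (hx : x ∈ ⨅ n : ℕ, smulRange R Λ N (π ^ n)) :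
    ∃ z ∈ ⨅ n : ℕ, smulRange R Λ N (π ^ n), algebraMap R Λ (π ^ k) • z = x := by
  choose w hw using fun n => mem_smulRange.mp ((Submodule.mem_iInf _).mp hx n)
  refine ⟨w k, (Submodule.mem_iInf _).mpr fun m => ⟨w (k + m), ?_⟩, hw k⟩
  apply htf.smul_left_cancel (pow_ne_zero k hπ)
  rw [smul_smul, ← map_mul, ← pow_add, hw (k + m), hw k]

theorem RTorsionFree.exists_smul_eq [IsDiscreteValuationRing R] (htf : RTorsionFree R Λ N)
    {π : R} (hπ : Irreducible π) {r : R} (hr : r ≠ 0) {x : N}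
    (hx : x ∈ ⨅ n : ℕ, smulRange R Λ N (π ^ n)) :
    ∃ z ∈ ⨅ n : ℕ, smulRange R Λ N (π ^ n), algebraMap R Λ r • z = x := by
  obtain ⟨n, u, rfl⟩ := IsDiscreteValuationRing.eq_unit_mul_pow_irreducible hr hπ
  obtain ⟨z, hz, rfl⟩ := htf.exists_pow_smul_eq hπ.ne_zero n hx
  refine ⟨algebraMap R Λ ↑u⁻¹ • z, Submodule.smul_mem _ _ hz, ?_⟩
  rw [smul_smul, ← map_mul, mul_right_comm, Units.mul_inv, one_mul]

end SmulRange

theorem statement_7_general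
    (R : Type u) [CommRing R] [IsDomain R] [IsDiscreteValuationRing R]
    (π : R) (hπ : IsLocalRing.maximalIdeal R = Ideal.span {π})
    (Q : Type u) [Field Q] [Algebra R Q] [IsFractionRing R Q]
    (A : Type u) [Ring A] [Algebra Q A] [Algebra R A] [IsScalarTower R Q A]
    [IsSemisimpleRing A]
    (Λ : Type u) [Ring Λ] [Algebra R Λ] (i : Λ →ₐ[R] A) (hΛ : IsOrderIn R Q A Λ i)
    (N : Type v) [AddCommGroup N] [Module Λ N] (htf : RTorsionFree R Λ N) :
    ∃ N' : Submodule Λ N,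
      IsCompl N' (⨅ k : ℕ, smulRange R Λ N (π ^ k)) ∧
      (∀ r : R, r ≠ 0 → smulRange R Λ (↥(⨅ k : ℕ, smulRange R Λ N (π ^ k))) r = ⊤) ∧
      (⨅ k : ℕ, smulRange R Λ (↥N') (π ^ k)) = ⊥ := by
  have hπ0 : π ≠ 0 := fun h =>
    IsDiscreteValuationRing.not_a_field R (by rw [hπ, h, Ideal.span_singleton_zero])
  have hirr : Irreducible π :=
    IsDiscreteValuationRing.irreducible_of_span_eq_maximalIdeal π hπ0 hπ
  have hdiv (r : R) (hr : r ≠ 0) : ∀ x ∈ ⨅ k : ℕ, smulRange R Λ N (π ^ k),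
      ∃ z ∈ ⨅ k : ℕ, smulRange R Λ N (π ^ k), algebraMap R Λ r • z = x :=
    fun _ hx => htf.exists_smul_eq hirr hr hx
  let _ : Module R N := Module.compHom N (algebraMap R Λ)
  have : IsScalarTower R Λ N := IsScalarTower.of_algebraMap_smul fun _ _ => rfl
  have : Module.IsTorsionFree R N := .of_smul_eq_zero fun r m h =>
    or_iff_not_imp_left.mpr fun hr => by_contra fun hm => htf m r hm hr h
  have := isSemisimpleRing_tensorProduct Q hΛ.inj hΛ.span
  obtain ⟨N', hN'⟩ := TensorProduct.exists_isCompl_of_divisible Q _ hdiv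
  exact ⟨N', hN', fun r hr => smulRange_eq_top (hdiv r hr),
    iInf_smulRange_pow_eq_bot hN'.disjoint⟩

/-- over an order in a finite-dimensional semisimple algebra over the fraction
field of a discrete valuation domain `R` with maximal ideal `(π)`, every `R`-torsionfree
module `N` decomposes as `N = N' ⊕ N''` where `N'' = ⋂ₙ N·πⁿ` is `R`-divisible and `N'` is
`R`-reduced. -/
theorem statement_7
    (R : Type u) [CommRing R] [IsDomain R] [IsDiscreteValuationRing R]
    (π : R) (hπ : IsLocalRing.maximalIdeal R = Ideal.span {π})
    (Q : Type u) [Field Q] [Algebra R Q] [IsFractionRing R Q]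
    (A : Type u) [Ring A] [Algebra Q A] [Algebra R A] [IsScalarTower R Q A]
    [FiniteDimensional Q A] [IsSemisimpleRing A]
    (Λ : Type u) [Ring Λ] [Algebra R Λ] (i : Λ →ₐ[R] A) (hΛ : IsOrderIn R Q A Λ i)
    (N : Type v) [AddCommGroup N] [Module Λ N] (htf : RTorsionFree R Λ N) :
    ∃ N' : Submodule Λ N,
      IsCompl N' (⨅ k : ℕ, smulRange R Λ N (π ^ k)) ∧
      (∀ r : R, r ≠ 0 → smulRange R Λ (↥(⨅ k : ℕ, smulRange R Λ N (π ^ k))) r = ⊤) ∧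
      (⨅ k : ℕ, smulRange R Λ (↥N') (π ^ k)) = ⊥ :=
  statement_7_general R π hπ Q A Λ i hΛ N htf
end

section
/- Let R be a complete discrete valuation domain with maximal ideal generated by π and field of fractions Q, let A be a finite-dimensional separable Q-algebra, let Λ be an R-order in A, let L be a Λ-lattice and N an R-torsionfree Λ-module. Let k₀ ∈ ℕ be such that π^{k₀}·Ext¹_Λ(L,N) = 0; concretely, assume that for every short exact sequence 0 → N → X →^p L → 0 of Λ-modules there is a Λ-homomorphism h : L → X with p∘h = π^{k₀}·id_L. Then for every integer k > k₀ and every Λ-homomorphism g : L/Lπ^k → N/Nπ^k there exists a Λ-homomorphism f : L → N such that for all m ∈ L, (f(m) + Nπ^k) − g(m + Lπ^k) ∈ π^{k−k₀}·(N/Nπ^k). -/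
open scoped TensorProduct

universe u v w

/-- Maranda-type lifting of homomorphisms. If `π^{k₀}·Ext¹(L,N) = 0` (expressed
via the lifting property for short exact sequences `0 → N → X → L → 0`), then for `k > k₀`
every `Λ`-homomorphism `g : L/Lπ^k → N/Nπ^k` is `π^{k-k₀}`-approximated by a genuine
homomorphism `f : L → N`. -/
theorem statement_11
    (R : Type u) [CommRing R] [IsDomain R] [IsDiscreteValuationRing R]
    (π : R) (hπ : IsLocalRing.maximalIdeal R = Ideal.span {π})
    [IsAdicComplete (IsLocalRing.maximalIdeal R) R]
    (Q : Type u) [Field Q] [Algebra R Q] [IsFractionRing R Q]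
    (A : Type u) [Ring A] [Algebra Q A] [Algebra R A] [IsScalarTower R Q A]
    [FiniteDimensional Q A] [IsSemisimpleRing A]
    -- `A` is separable: it remains semisimple under every field extension of `Q`
    (hsep : ∀ (K : Type u) [Field K] [Algebra Q K], IsSemisimpleRing (K ⊗[Q] A))
    (Λ : Type u) [Ring Λ] [Algebra R Λ] (i : Λ →ₐ[R] A) (hΛ : IsOrderIn R Q A Λ i)
    (L : Type u) [AddCommGroup L] [Module Λ L] (hL : IsLatticeModule R Λ L)
    (N : Type u) [AddCommGroup N] [Module Λ N] (hN : RTorsionFree R Λ N)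
    (k₀ : ℕ)
    -- `π^{k₀}·Ext¹(L,N) = 0`:
    (hk₀ : ∀ (X : Type u) [AddCommGroup X] [Module Λ X]
      (e : N →ₗ[Λ] X) (p : X →ₗ[Λ] L), Function.Injective e → Function.Surjective p →
      LinearMap.range e = LinearMap.ker p →
      ∃ h : L →ₗ[Λ] X, ∀ x : L, p (h x) = algebraMap R Λ (π ^ k₀) • x)
    (k : ℕ) (hk : k > k₀)
    (g : (L ⧸ smulRange R Λ L (π ^ k)) →ₗ[Λ] (N ⧸ smulRange R Λ N (π ^ k))) :
    ∃ f : L →ₗ[Λ] N, ∀ m : L,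
      Submodule.Quotient.mk (f m) - g (Submodule.Quotient.mk m) ∈
        smulRange R Λ (N ⧸ smulRange R Λ N (π ^ k)) (π ^ (k - k₀)) := by
  classical
  have hπ0 : π ≠ 0 := by
    intro h
    have hne := IsDiscreteValuationRing.not_a_field R
    rw [hπ, h] at hne
    exact hne (Ideal.span_singleton_eq_bot.mpr rfl)
  -- cancellation in N
  have hcancel : ∀ (t : ℕ) (a b : N),
      algebraMap R Λ (π ^ t) • a = algebraMap R Λ (π ^ t) • b → a = b := by
    intro t a b hab
    by_contra hne
    exact hN (a - b) (π ^ t) (sub_ne_zero.mpr hne) (pow_ne_zero t hπ0)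
      (by rw [smul_sub, hab, sub_self])
  have memN : ∀ (x : N), x ∈ smulRange R Λ N (π ^ k) ↔
      ∃ n : N, algebraMap R Λ (π ^ k) • n = x := by
    intro x; exact Iff.rfl
  let mkL : L →ₗ[Λ] L ⧸ smulRange R Λ L (π ^ k) := Submodule.mkQ _
  let mkN : N →ₗ[Λ] N ⧸ smulRange R Λ N (π ^ k) := Submodule.mkQ _
  let q : (L × N) →ₗ[Λ] (N ⧸ smulRange R Λ N (π ^ k)) :=
    (g.comp (mkL.comp (LinearMap.fst Λ L N))) - (mkN.comp (LinearMap.snd Λ L N))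
  set X := LinearMap.ker q with hX
  have memX : ∀ z : L × N, z ∈ X ↔ g (mkL z.1) = mkN z.2 := by
    intro z
    rw [hX, LinearMap.mem_ker]
    constructor
    · intro hz
      have := sub_eq_zero.mp hz
      exact this
    · intro hz
      show g (mkL z.1) - mkN z.2 = 0
      rw [hz, sub_self]
  -- the map e : N → X
  have he0smul : ∀ (c : Λ) (n : N),
      algebraMap R Λ (π ^ k) • (c • n) = c • (algebraMap R Λ (π ^ k) • n) := by
    intro c n
    rw [smul_smul, smul_smul, Algebra.commutes]
  let e0 : N →ₗ[Λ] L × N :=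
    { toFun := fun n => (0, algebraMap R Λ (π ^ k) • n)
      map_add' := by intro a b; simp [smul_add, Prod.ext_iff]
      map_smul' := by
        intro c n
        exact Prod.ext_iff.mpr ⟨(smul_zero c).symm, he0smul c n⟩ }
  have he0mem : ∀ n : N, e0 n ∈ X := by
    intro n
    rw [memX]
    show g (mkL 0) = mkN (algebraMap R Λ (π ^ k) • n)
    have h1 : mkN (algebraMap R Λ (π ^ k) • n) = 0 := by
      rw [Submodule.mkQ_apply, Submodule.Quotient.mk_eq_zero]
      exact ⟨n, rfl⟩
    rw [h1, map_zero, map_zero]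
  let e : N →ₗ[Λ] X := LinearMap.codRestrict X e0 he0mem
  let p : X →ₗ[Λ] L := (LinearMap.fst Λ L N).comp X.subtype
  have heinj : Function.Injective e := by
    intro a b hab
    have h1 : e0 a = e0 b := congrArg Subtype.val hab
    have h2 : algebraMap R Λ (π ^ k) • a = algebraMap R Λ (π ^ k) • b :=
      congrArg Prod.snd h1
    exact hcancel k a b h2
  have hpsurj : Function.Surjective p := by
    intro x
    obtain ⟨n, hn⟩ := Submodule.mkQ_surjective _ (g (mkL x))
    exact ⟨⟨(x, n), (memX (x, n)).mpr hn.symm⟩, rfl⟩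
  have hrange : LinearMap.range e = LinearMap.ker p := by
    ext z
    constructor
    · rintro ⟨n, rfl⟩
      show (e0 n).1 = 0
      rfl
    · intro hz
      have hz1 : (z : L × N).1 = 0 := hz
      have hz2 := (memX z).mp z.2
      rw [hz1] at hz2
      rw [map_zero, map_zero] at hz2
      have : (z : L × N).2 ∈ smulRange R Λ N (π ^ k) := by
        rw [← Submodule.Quotient.mk_eq_zero]
        exact hz2.symm
      obtain ⟨n, hn⟩ := (memN _).mp this
      refine ⟨n, ?_⟩
      apply Subtype.ext
      show (0, algebraMap R Λ (π ^ k) • n) = (z : L × N)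
      rw [hn, ← hz1]
  obtain ⟨h, hh⟩ := hk₀ X e p heinj hpsurj hrange
  let h₂ : L →ₗ[Λ] N := (LinearMap.snd Λ L N).comp (X.subtype.comp h)
  -- key identity
  have hkey : ∀ m : L, mkN (h₂ m) = algebraMap R Λ (π ^ k₀) • g (mkL m) := by
    intro m
    have h1 := (memX _).mp (h m).2
    have h2 : ((h m : X) : L × N).1 = algebraMap R Λ (π ^ k₀) • m := hh m
    rw [h2] at h1
    calc mkN (h₂ m) = g (mkL (algebraMap R Λ (π ^ k₀) • m)) := h1.symm
      _ = algebraMap R Λ (π ^ k₀) • g (mkL m) := by rw [map_smul, map_smul]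
  have hkk : π ^ k₀ * π ^ (k - k₀) = π ^ k := by
    rw [← pow_add, Nat.add_sub_cancel' hk.le]
  -- divisibility of h₂ m by π ^ k₀
  have hdiv : ∀ m : L, ∃ n : N, algebraMap R Λ (π ^ k₀) • n = h₂ m := by
    intro m
    obtain ⟨w, hw⟩ := Submodule.mkQ_surjective _ (g (mkL m))
    have h1 : mkN (h₂ m - algebraMap R Λ (π ^ k₀) • w) = 0 := by
      rw [map_sub, map_smul, hw, hkey m, sub_self]
    rw [Submodule.mkQ_apply, Submodule.Quotient.mk_eq_zero] at h1
    obtain ⟨v, hv⟩ := (memN _).mp h1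
    refine ⟨w + algebraMap R Λ (π ^ (k - k₀)) • v, ?_⟩
    rw [smul_add, smul_smul, ← map_mul, hkk, hv]
    abel
  let f0 : L → N := fun m => (hdiv m).choose
  have hf0 : ∀ m : L, algebraMap R Λ (π ^ k₀) • f0 m = h₂ m := fun m => (hdiv m).choose_spec
  let f : L →ₗ[Λ] N :=
    { toFun := f0
      map_add' := by
        intro a b
        apply hcancel k₀
        rw [hf0, smul_add, hf0, hf0, map_add]
      map_smul' := by
        intro c a
        apply hcancel k₀
        rw [hf0]
        show h₂ (c • a) = algebraMap R Λ (π ^ k₀) • (c • f0 a)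
        rw [map_smul, ← hf0 a, smul_smul, smul_smul, Algebra.commutes] }
  refine ⟨f, ?_⟩
  intro m
  have hz : algebraMap R Λ (π ^ k₀) • (mkN (f0 m) - g (mkL m)) = 0 := by
    rw [smul_sub, ← map_smul mkN, hf0, hkey m, sub_self]
  -- extract membership
  obtain ⟨u, hu⟩ := Submodule.mkQ_surjective _ (mkN (f0 m) - g (mkL m))
  have hu' : mkN u = mkN (f0 m) - g (mkL m) := hu
  rw [← hu', ← map_smul] at hz
  have hz' : algebraMap R Λ (π ^ k₀) • u ∈ smulRange R Λ N (π ^ k) := by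
    have hz'' : (Submodule.Quotient.mk (algebraMap R Λ (π ^ k₀) • u) :
        N ⧸ smulRange R Λ N (π ^ k)) = 0 := hz
    rwa [Submodule.Quotient.mk_eq_zero] at hz''
  obtain ⟨v, hv⟩ := (memN _).mp hz'
  have huv : u = algebraMap R Λ (π ^ (k - k₀)) • v := by
    apply hcancel k₀
    rw [smul_smul, ← map_mul, hkk, hv]
  refine ⟨mkN v, ?_⟩
  show algebraMap R Λ (π ^ (k - k₀)) • mkN v = mkN (f0 m) - g (mkL m)
  calc algebraMap R Λ (π ^ (k - k₀)) • mkN v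
      = mkN (algebraMap R Λ (π ^ (k - k₀)) • v) := (map_smul mkN _ _).symm
    _ = mkN u := by rw [← huv]
    _ = mkN (f0 m) - g (mkL m) := hu'
end

section
/- Let R be a complete discrete valuation domain with maximal ideal generated by π and field of fractions Q, let A be a finite-dimensional separable Q-algebra, and let Λ be an R-order in A. Suppose k₀ ∈ ℕ is such that for every short exact sequence 0 → N' → X →^p L' → 0 of Λ-lattices there is a Λ-homomorphism h : L' → X with p∘h = π^{k₀}·id_{L'} (i.e. π^{k₀}·Ext¹_Λ(L',N') = 0 for all Λ-lattices L', N'). Then for every Λ-lattice L, every R-torsionfree Λ-module N, and every short exact sequence 0 → N → X →^p L → 0 of Λ-modules, there is a Λ-homomorphism h : L → X with p∘h = π^{k₀}·id_L (i.e. π^{k₀}·Ext¹_Λ(L,N) = 0 for every Λ-lattice L and every R-torsionfree Λ-module N). -/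
open scoped TensorProduct

universe u v w

/-- if `π^{k₀}` annihilates `Ext¹_Λ(L',N')` for all `Λ`-lattices `L'`, `N'`
(expressed via the lifting property for short exact sequences of lattices), then `π^{k₀}`
annihilates `Ext¹_Λ(L,N)` for every `Λ`-lattice `L` and every `R`-torsionfree `Λ`-module `N`
(expressed via the same lifting property for arbitrary short exact sequences of
`Λ`-modules `0 → N → X → L → 0`). -/
theorem statement_12
    (R : Type u) [CommRing R] [IsDomain R] [IsDiscreteValuationRing R]
    (π : R) (hπ : IsLocalRing.maximalIdeal R = Ideal.span {π})
    [IsAdicComplete (IsLocalRing.maximalIdeal R) R]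
    (Q : Type u) [Field Q] [Algebra R Q] [IsFractionRing R Q]
    (A : Type u) [Ring A] [Algebra Q A] [Algebra R A] [IsScalarTower R Q A]
    [FiniteDimensional Q A] [IsSemisimpleRing A]
    (hsep : ∀ (K : Type u) [Field K] [Algebra Q K], IsSemisimpleRing (K ⊗[Q] A))
    (Λ : Type u) [Ring Λ] [Algebra R Λ] (i : Λ →ₐ[R] A) (hΛ : IsOrderIn R Q A Λ i)
    (k₀ : ℕ)
    -- `π^{k₀}·Ext¹(L',N') = 0` for all lattices `L'`, `N'`:
    (hk₀ : ∀ (N' X L' : Type u) [AddCommGroup N'] [Module Λ N'] [AddCommGroup X] [Module Λ X]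
      [AddCommGroup L'] [Module Λ L'],
      IsLatticeModule R Λ N' → IsLatticeModule R Λ X → IsLatticeModule R Λ L' →
      ∀ (e : N' →ₗ[Λ] X) (p : X →ₗ[Λ] L'), Function.Injective e → Function.Surjective p →
        LinearMap.range e = LinearMap.ker p →
        ∃ h : L' →ₗ[Λ] X, ∀ x : L', p (h x) = algebraMap R Λ (π ^ k₀) • x)
    (L : Type u) [AddCommGroup L] [Module Λ L] (hL : IsLatticeModule R Λ L)
    (N : Type u) [AddCommGroup N] [Module Λ N] (hN : RTorsionFree R Λ N)
    (X : Type u) [AddCommGroup X] [Module Λ X]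
    (e : N →ₗ[Λ] X) (p : X →ₗ[Λ] L) (he : Function.Injective e) (hp : Function.Surjective p)
    (hex : LinearMap.range e = LinearMap.ker p) :
    ∃ h : L →ₗ[Λ] X, ∀ x : L, p (h x) = algebraMap R Λ (π ^ k₀) • x := by
  classical
  -- X is R-torsionfree since N and L are.
  have hX : RTorsionFree R Λ X := by
    intro x r hx hr hrx
    have hpx : p x = 0 := by
      by_contra hne
      exact hL.2 (p x) r hne hr (by rw [← map_smul, hrx, map_zero])
    have hx' : x ∈ LinearMap.range e := by rw [hex]; exact hpx
    obtain ⟨n, rfl⟩ := hx'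
    have hn : n ≠ 0 := fun h0 => hx (by rw [h0, map_zero])
    have hzero : e (algebraMap R Λ r • n) = 0 := by rw [map_smul, hrx]
    exact hN n r hn hr (he (by rw [hzero, map_zero]))
  -- Λ is a Noetherian ring.
  haveI := hΛ.fin
  haveI : IsNoetherian R Λ := isNoetherian_of_isNoetherianRing_of_finite R Λ
  haveI : IsNoetherianRing Λ := isNoetherian_of_tower R inferInstance
  -- choose finitely many generators of L and preimages under p
  obtain ⟨S, hS⟩ : (⊤ : Submodule Λ L).FG := hL.1.fg_top
  choose σ hσ using hp
  set X₀ : Submodule Λ X := Submodule.span Λ (σ '' ↑S) with hX₀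
  have hmap : Submodule.map p X₀ = ⊤ := by
    rw [hX₀, Submodule.map_span, ← Set.image_comp]
    have : (p ∘ σ) '' ↑S = ↑S := by
      ext l; constructor
      · rintro ⟨a, ha, rfl⟩; simpa [hσ] using ha
      · intro hl; exact ⟨l, hl, hσ l⟩
    rw [this, hS]
  haveI : Module.Finite Λ ↥X₀ :=
    Module.Finite.iff_fg.mpr (Submodule.fg_span (Set.Finite.image _ S.finite_toSet))
  set p' : ↥X₀ →ₗ[Λ] L := p ∘ₗ X₀.subtype with hp'
  have hp'surj : Function.Surjective p' := by
    intro l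
    have : l ∈ Submodule.map p X₀ := by rw [hmap]; trivial
    obtain ⟨x, hx, hpx⟩ := this
    exact ⟨⟨x, hx⟩, hpx⟩
  set N₀ : Submodule Λ ↥X₀ := LinearMap.ker p' with hN₀
  haveI : Module.Finite Λ ↥N₀ := Module.Finite.iff_fg.mpr (IsNoetherian.noetherian N₀)
  -- torsionfreeness of submodules of X
  have hXtf : RTorsionFree R Λ ↥X₀ := by
    intro m r hm hr hc
    refine hX (m : X) r (fun h0 => hm (Subtype.ext h0)) hr ?_
    have := congrArg (Subtype.val) hc
    simpa using this
  have hNtf : RTorsionFree R Λ ↥N₀ := by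
    intro m r hm hr hc
    refine hXtf (m : ↥X₀) r (fun h0 => hm (Subtype.ext h0)) hr ?_
    have := congrArg (Subtype.val) hc
    simpa using this
  -- apply the hypothesis to the lattice exact sequence 0 → N₀ → X₀ → L → 0
  obtain ⟨h₀, hh₀⟩ := hk₀ ↥N₀ ↥X₀ L ⟨inferInstance, hNtf⟩ ⟨inferInstance, hXtf⟩ hL
    N₀.subtype p' (Submodule.injective_subtype N₀) hp'surj
    (by rw [Submodule.range_subtype])
  exact ⟨X₀.subtype ∘ₗ h₀, fun x => hh₀ x⟩
end

section
/- Let R be a complete discrete valuation domain with maximal ideal generated by π and field of fractions Q, and let Λ be the R-order in the matrix algebra M₂(Q) consisting of all 2×2 matrices (a b; c d) with a, b, d ∈ R and c ∈ π²R. Regard the set of row vectors R × R as a right Λ-module under matrix multiplication, with Λ-submodules P₁ = R × R, P₂ = π²R × R and P = πR × R. Then the maps α : P → P₁ ⊕ P₂ defined by α(v) = (v, vπ) and β : P₁ ⊕ P₂ → P defined by β(u, w) = uπ − w are Λ-module homomorphisms, and 0 → P →^α P₁ ⊕ P₂ →^β P → 0 is a short exact sequence of Λ-modules which is not split. -/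
open scoped TensorProduct

universe u v w

/-- for the order `Λ = (R R; π²R R)` in `M₂(Q)`, with right `Λ`-modules of row
vectors `P₁ = R × R`, `P₂ = π²R × R`, `P = πR × R` in `Q × Q`, the maps `α : v ↦ (v, vπ)` and
`β : (u,w) ↦ uπ − w` are `Λ`-module homomorphisms and `0 → P →α P₁ ⊕ P₂ →β P → 0` is a
non-split short exact sequence of `Λ`-modules. Membership in `Λ`, `P₁`, `P₂`, `P` and
`Λ`-equivariance (with the right action given by `Matrix.vecMul`) are expressed by explicit
predicates. -/
theorem statement_15
    (R : Type u) [CommRing R] [IsDomain R] [IsDiscreteValuationRing R]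
    (π : R) (hπ : IsLocalRing.maximalIdeal R = Ideal.span {π})
    [IsAdicComplete (IsLocalRing.maximalIdeal R) R]
    (Q : Type u) [Field Q] [Algebra R Q] [IsFractionRing R Q] :
    let ρ : R → Q := algebraMap R Q
    -- the order `Λ = {(a b; c d) : a, b, d ∈ R, c ∈ π²R}`
    let inΛ : Matrix (Fin 2) (Fin 2) Q → Prop := fun X =>
      (∃ a : R, X 0 0 = ρ a) ∧ (∃ b : R, X 0 1 = ρ b) ∧
      (∃ c : R, X 1 0 = ρ (π ^ 2 * c)) ∧ (∃ d : R, X 1 1 = ρ d)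
    -- the lattices `P₁ = R × R`, `P₂ = π²R × R`, `P = πR × R` of row vectors
    let inP₁ : (Fin 2 → Q) → Prop := fun v => (∃ a : R, v 0 = ρ a) ∧ (∃ b : R, v 1 = ρ b)
    let inP₂ : (Fin 2 → Q) → Prop := fun v =>
      (∃ a : R, v 0 = ρ (π ^ 2 * a)) ∧ (∃ b : R, v 1 = ρ b)
    let inP : (Fin 2 → Q) → Prop := fun v =>
      (∃ a : R, v 0 = ρ (π * a)) ∧ (∃ b : R, v 1 = ρ b)
    -- the maps `α : v ↦ (v, vπ)` and `β : (u, w) ↦ uπ - w`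
    let α : (Fin 2 → Q) → (Fin 2 → Q) × (Fin 2 → Q) := fun v => (v, ρ π • v)
    let β : (Fin 2 → Q) × (Fin 2 → Q) → (Fin 2 → Q) := fun uw => ρ π • uw.1 - uw.2
    -- `Λ` is a subring of `M₂(Q)`
    ((inΛ 1 ∧ ∀ X Y, inΛ X → inΛ Y → inΛ (X - Y) ∧ inΛ (X * Y)) ∧
    -- `P₁`, `P₂`, `P` are right `Λ`-submodules of `Q × Q`
    ((∀ v X, inP₁ v → inΛ X → inP₁ (Matrix.vecMul v X)) ∧
     (∀ v X, inP₂ v → inΛ X → inP₂ (Matrix.vecMul v X)) ∧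
     (∀ v X, inP v → inΛ X → inP (Matrix.vecMul v X))) ∧
    -- `α` and `β` are `Λ`-module homomorphisms
    ((∀ v, inP v → inP₁ (α v).1 ∧ inP₂ (α v).2) ∧
     (∀ v w, α (v + w) = α v + α w) ∧
     (∀ v X, inΛ X →
        α (Matrix.vecMul v X) = (Matrix.vecMul (α v).1 X, Matrix.vecMul (α v).2 X)) ∧
     (∀ u w, inP₁ u → inP₂ w → inP (β (u, w))) ∧
     (∀ u w u' w', β (u + u', w + w') = β (u, w) + β (u', w')) ∧
     (∀ u w X, inΛ X →
        β (Matrix.vecMul u X, Matrix.vecMul w X) = Matrix.vecMul (β (u, w)) X)) ∧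
    -- `0 → P → P₁ ⊕ P₂ → P → 0` is a short exact sequence
    ((∀ v, inP v → α v = 0 → v = 0) ∧
     (∀ u w, inP₁ u → inP₂ w → (β (u, w) = 0 ↔ ∃ v, inP v ∧ (u, w) = α v)) ∧
     (∀ x, inP x → ∃ u w, inP₁ u ∧ inP₂ w ∧ β (u, w) = x)) ∧
    -- and it is not split: `α` admits no `Λ`-linear retraction `γ : P₁ ⊕ P₂ → P`
    ¬∃ γ : (Fin 2 → Q) × (Fin 2 → Q) → (Fin 2 → Q),
      (∀ u w, inP₁ u → inP₂ w → inP (γ (u, w))) ∧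
      (∀ u w u' w', inP₁ u → inP₂ w → inP₁ u' → inP₂ w' →
        γ (u + u', w + w') = γ (u, w) + γ (u', w')) ∧
      (∀ u w X, inP₁ u → inP₂ w → inΛ X →
        γ (Matrix.vecMul u X, Matrix.vecMul w X) = Matrix.vecMul (γ (u, w)) X) ∧
      (∀ v, inP v → γ (α v) = v)) := by
  intro ρ inΛ inP₁ inP₂ inP α β
  have hρinj : Function.Injective ρ := IsFractionRing.injective R Q
  have hπ0 : π ≠ 0 := by
    intro h
    exact IsDiscreteValuationRing.not_a_field R (by rw [hπ, h, Ideal.span_singleton_eq_bot])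
  -- memberships of basic elements
  have hP10 : inP₁ (0 : Fin 2 → Q) := ⟨⟨0, by simp [ρ, map_neg]⟩, ⟨0, by simp [ρ, map_neg]⟩⟩
  have hP20 : inP₂ (0 : Fin 2 → Q) := ⟨⟨0, by simp [ρ, map_neg]⟩, ⟨0, by simp [ρ, map_neg]⟩⟩
  refine ⟨⟨?_, ?_⟩, ⟨?_, ?_, ?_⟩, ⟨?_, ?_, ?_, ?_, ?_, ?_⟩, ⟨?_, ?_, ?_⟩, ?_⟩
  · -- 1 ∈ Λ
    exact ⟨⟨1, by simp [ρ, Matrix.one_apply]⟩, ⟨0, by simp [ρ, Matrix.one_apply]⟩,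
      ⟨0, by simp [ρ, Matrix.one_apply]⟩, ⟨1, by simp [ρ, Matrix.one_apply]⟩⟩
  · -- closed under sub and mul
    rintro X Y ⟨⟨a, ha⟩, ⟨b, hb⟩, ⟨c, hc⟩, ⟨d, hd⟩⟩ ⟨⟨a', ha'⟩, ⟨b', hb'⟩, ⟨c', hc'⟩, ⟨d', hd'⟩⟩
    refine ⟨⟨⟨a - a', ?_⟩, ⟨b - b', ?_⟩, ⟨c - c', ?_⟩, ⟨d - d', ?_⟩⟩,
      ⟨⟨a * a' + b * (π ^ 2 * c'), ?_⟩, ⟨a * b' + b * d', ?_⟩,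
       ⟨c * a' + d * c', ?_⟩, ⟨π ^ 2 * c * b' + d * d', ?_⟩⟩⟩ <;>
      simp only [ρ, Matrix.sub_apply, Matrix.mul_apply, Fin.sum_univ_two, ha, hb, hc, hd,
        ha', hb', hc', hd', map_add, map_sub, map_mul, map_pow] <;> ring
  · -- P₁ is a Λ-submodule
    rintro v X ⟨⟨a, ha⟩, ⟨b, hb⟩⟩ ⟨⟨a', ha'⟩, ⟨b', hb'⟩, ⟨c', hc'⟩, ⟨d', hd'⟩⟩
    refine ⟨⟨a * a' + b * (π ^ 2 * c'), ?_⟩, ⟨a * b' + b * d', ?_⟩⟩ <;>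
      simp only [ρ, Matrix.vecMul, dotProduct, Fin.sum_univ_two, ha, hb,
        ha', hb', hc', hd', map_add, map_mul, map_pow] <;> ring
  · -- P₂ is a Λ-submodule
    rintro v X ⟨⟨a, ha⟩, ⟨b, hb⟩⟩ ⟨⟨a', ha'⟩, ⟨b', hb'⟩, ⟨c', hc'⟩, ⟨d', hd'⟩⟩
    refine ⟨⟨a * a' + b * c', ?_⟩, ⟨π ^ 2 * a * b' + b * d', ?_⟩⟩ <;>
      simp only [ρ, Matrix.vecMul, dotProduct, Fin.sum_univ_two, ha, hb,
        ha', hb', hc', hd', map_add, map_mul, map_pow] <;> ring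
  · -- P is a Λ-submodule
    rintro v X ⟨⟨a, ha⟩, ⟨b, hb⟩⟩ ⟨⟨a', ha'⟩, ⟨b', hb'⟩, ⟨c', hc'⟩, ⟨d', hd'⟩⟩
    refine ⟨⟨a * a' + π * (b * c'), ?_⟩, ⟨π * a * b' + b * d', ?_⟩⟩ <;>
      simp only [ρ, Matrix.vecMul, dotProduct, Fin.sum_univ_two, ha, hb,
        ha', hb', hc', hd', map_add, map_mul, map_pow] <;> ring
  · -- α maps P into P₁ ⊕ P₂
    rintro v ⟨⟨a, ha⟩, ⟨b, hb⟩⟩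
    refine ⟨⟨⟨π * a, ha⟩, ⟨b, hb⟩⟩, ⟨⟨a, ?_⟩, ⟨π * b, ?_⟩⟩⟩ <;>
      simp only [ρ, α, Pi.smul_apply, smul_eq_mul, ha, hb, map_mul, map_pow] <;> ring
  · -- α is additive
    intro v w
    simp only [ρ, α, Prod.mk_add_mk, smul_add]
  · -- α is Λ-equivariant
    intro v X hX
    have hs : ρ π • Matrix.vecMul v X = Matrix.vecMul (ρ π • v) X := by
      funext j
      simp only [ρ, Pi.smul_apply, smul_eq_mul, Matrix.vecMul, dotProduct,
        Fin.sum_univ_two]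
      ring
    simp only [ρ, α, hs]
  · -- β maps P₁ ⊕ P₂ into P
    rintro u w ⟨⟨a, ha⟩, ⟨b, hb⟩⟩ ⟨⟨c, hc⟩, ⟨d, hd⟩⟩
    refine ⟨⟨a - π * c, ?_⟩, ⟨π * b - d, ?_⟩⟩ <;>
      simp only [ρ, β, Pi.sub_apply, Pi.smul_apply, smul_eq_mul, ha, hb, hc, hd,
        map_sub, map_mul, map_pow] <;> ring
  · -- β is additive
    intro u w u' w'
    simp only [ρ, β, smul_add]
    abel
  · -- β is Λ-equivariant
    intro u w X hX
    funext j
    simp only [ρ, β, Pi.sub_apply, Pi.smul_apply, smul_eq_mul, Matrix.vecMul,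
      dotProduct, Fin.sum_univ_two]
    ring
  · -- α is injective
    intro v _ h
    have := congrArg Prod.fst h
    simpa [α] using this
  · -- exactness in the middle
    rintro u w ⟨⟨a, ha⟩, ⟨b, hb⟩⟩ ⟨⟨c, hc⟩, ⟨d, hd⟩⟩
    constructor
    · intro h
      have hw : ρ π • u = w := by
        have := sub_eq_zero.mp (show ρ π • u - w = 0 from h)
        exact this
      have h0 : ρ (π ^ 2 * c) = ρ (π * a) := by
        rw [← hc, ← hw]
        simp only [ρ, Pi.smul_apply, smul_eq_mul, ha, map_mul]
      have hac : a = π * c := by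
        have h1 : π * a = π * (π * c) := by
          have := hρinj h0
          rw [← this]; ring
        exact mul_left_cancel₀ hπ0 h1
      refine ⟨u, ⟨⟨c, by rw [ha, hac]⟩, ⟨b, hb⟩⟩, ?_⟩
      simp only [ρ, α, Prod.mk.injEq, true_and]
      exact hw.symm
    · rintro ⟨v, _, hv⟩
      obtain ⟨h1, h2⟩ := Prod.mk.injEq .. ▸ hv
      simp only [ρ, β, h1, h2, α, sub_self]
  · -- β is surjective onto P
    rintro x ⟨⟨a, ha⟩, ⟨b, hb⟩⟩
    refine ⟨![ρ a, 0], ![0, -ρ b], ⟨⟨a, by simp [ρ, map_neg]⟩, ⟨0, by simp [ρ, map_neg]⟩⟩,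
      ⟨⟨0, by simp [ρ, map_neg]⟩, ⟨-b, by simp [ρ, map_neg]⟩⟩, ?_⟩
    funext j
    fin_cases j <;>
      simp [ρ, β, ha, hb, map_mul, Algebra.smul_def]
  · -- non-split
    rintro ⟨γ, hmem, hadd, hequiv, hretr⟩
    set e1 : Fin 2 → Q := ![1, 0] with he1
    set e2 : Fin 2 → Q := ![0, 1] with he2
    have hP1e1 : inP₁ e1 := ⟨⟨1, by simp [ρ, he1]⟩, ⟨0, by simp [ρ, he1]⟩⟩
    have hP1e2 : inP₁ e2 := ⟨⟨0, by simp [ρ, he2]⟩, ⟨1, by simp [ρ, he2]⟩⟩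
    have hP2e2 : inP₂ e2 := ⟨⟨0, by simp [ρ, he2]⟩, ⟨1, by simp [ρ, he2]⟩⟩
    have hPe2 : inP e2 := ⟨⟨0, by simp [ρ, he2]⟩, ⟨1, by simp [ρ, he2]⟩⟩
    have hP2pe2 : inP₂ (ρ π • e2) := ⟨⟨0, by simp [ρ, he2]⟩, ⟨π, by simp [ρ, he2]⟩⟩
    set X12 : Matrix (Fin 2) (Fin 2) Q := ![![0, 1], ![0, 0]] with hX12def
    set Xπ : Matrix (Fin 2) (Fin 2) Q := ![![ρ π, 0], ![0, ρ π]] with hXπdef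
    have hΛ12 : inΛ X12 := ⟨⟨0, by simp [ρ, hX12def]⟩, ⟨1, by simp [ρ, hX12def]⟩,
      ⟨0, by simp [ρ, hX12def]⟩, ⟨0, by simp [ρ, hX12def]⟩⟩
    have hΛπ : inΛ Xπ := ⟨⟨π, by simp [ρ, hXπdef]⟩, ⟨0, by simp [ρ, hXπdef]⟩,
      ⟨0, by simp [ρ, hXπdef]⟩, ⟨π, by simp [ρ, hXπdef]⟩⟩
    have hvm1 : Matrix.vecMul e1 X12 = e2 := by
      funext j; fin_cases j <;>
        simp [ρ, Matrix.vecMul, dotProduct, Fin.sum_univ_two, he1, he2, hX12def]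
    have hvm2 : Matrix.vecMul e2 Xπ = ρ π • e2 := by
      funext j; fin_cases j <;>
        simp [ρ, Matrix.vecMul, dotProduct, Fin.sum_univ_two, he2, hXπdef]
    have hvm0 : ∀ X : Matrix (Fin 2) (Fin 2) Q, Matrix.vecMul (0 : Fin 2 → Q) X = 0 :=
      fun X => Matrix.zero_vecMul X
    -- γ(0,0) = 0
    have h00 : γ (0, 0) = 0 := by
      have h := hadd 0 0 0 0 hP10 hP20 hP10 hP20
      simp only [ρ, add_zero] at h
      exact (left_eq_add.mp h)
    have hg : γ (e2, 0) = Matrix.vecMul (γ (e1, 0)) X12 := by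
      have h := hequiv e1 0 X12 hP1e1 hP20 hΛ12
      rwa [hvm1, hvm0] at h
    have hh : γ (0, ρ π • e2) = Matrix.vecMul (γ (0, e2)) Xπ := by
      have h := hequiv 0 e2 Xπ hP10 hP2e2 hΛπ
      rwa [hvm2, hvm0] at h
    have hsum : γ (e2, ρ π • e2) = γ (e2, 0) + γ (0, ρ π • e2) := by
      have h := hadd e2 0 0 (ρ π • e2) hP1e2 hP20 hP10 hP2pe2
      simpa using h
    have hret : γ (e2, ρ π • e2) = e2 := hretr e2 hPe2
    obtain ⟨⟨a', ha'⟩, -⟩ := hmem e1 0 hP1e1 hP20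
    obtain ⟨-, ⟨bh, hbh⟩⟩ := hmem 0 e2 hP10 hP2e2
    have E : Matrix.vecMul (γ (e1, 0)) X12 + Matrix.vecMul (γ (0, e2)) Xπ = e2 := by
      rw [← hg, ← hh, ← hsum, hret]
    have E1 := congrFun E 1
    simp only [ρ, Pi.add_apply, Matrix.vecMul, dotProduct, Fin.sum_univ_two,
      hX12def, hXπdef, he2, ha', hbh, Matrix.cons_val_zero, Matrix.cons_val_one,
      Matrix.head_cons, mul_zero, mul_one, zero_add, add_zero, zero_mul] at E1
    have hr : π * (a' + bh) = 1 := by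
      apply hρinj
      simp only [ρ, map_one, map_mul, map_add]
      simp only [ρ, map_mul] at E1
      have hbh' : γ (0, ![0, 1]) 1 = algebraMap R Q bh := hbh
      linear_combination E1 - (algebraMap R Q π) * hbh'
    have hu : IsUnit π := IsUnit.of_mul_eq_one _ hr
    have hmem' : π ∈ IsLocalRing.maximalIdeal R := by
      rw [hπ]; exact Ideal.mem_span_singleton_self π
    exact (IsLocalRing.mem_maximalIdeal π).mp hmem' hu
end
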